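/- arXiv:1811.09853 — 8 statements merged into one kernel-verified Lean document; each statement's English description precedes it below -/
import Mathlib

section
/- Let p be a prime and n a positive integer. There is an absolute constant C > 0 such that for every subset A of F_p^n with |A| = α·p^n for some α > 0, the set 2A − 2A = {a + b − c − d : a, b, c, d ∈ A} contains a linear subspace of F_p^n of codimension at most C·α^{-2}. -/
/-!
Index the characters of a vector space `V` over a finite field by linear functionals,
`x ↦ e (f x)` for a fixed nontrivial additive character `e` of the field, and put `Â f = ∑_{a ∈ A} e (f a)`. Orthogonality gives
`|V| · r(x) = ∑_f ‖Â f‖⁴ e (f (-x))`, where `r(x)` counts the representations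
`x = a - b + (c - d)` with `a, b, c, d ∈ A`. Let `S` be the large spectrum
`{f | |A|³ / (2|V|) ≤ ‖Â f‖²}` and `W` the common kernel of `S`. For `x ∈ W` the terms with
`f ∈ S` equal `‖Â f‖⁴`, the trivial one alone contributing `|A|⁴`, while by Parseval
(`∑_f ‖Â f‖² = |V| |A|`) the remaining ones add up to at most `|A|⁴ / 2` in absolute value;
hence `r(x) > 0`. Parseval also gives `|S| ≤ 2 (|V| / |A|)² = 2 α⁻²`, and `W` has codimension
at most `|S|`.
-/

open Finset Module
open scoped Pointwise

section

variable {K V : Type*} [Field K] [Fintype K] [AddCommGroup V] [Module K V] [Fintype V]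

instance : Finite (Dual K V) := DFunLike.finite _

noncomputable instance : Fintype (Dual K V) := Fintype.ofFinite _

lemma Module.card_dual : Fintype.card (Dual K V) = Fintype.card V := by
  rw [card_eq_pow_finrank (K := K), card_eq_pow_finrank (K := K) (V := V),
    Subspace.dual_finrank_eq]

omit [Fintype K] [Fintype V] in
lemma finrank_le_finrank_dualCoannihilator_span_add_card [FiniteDimensional K V]
    (S : Finset (Dual K V)) :
    finrank K V ≤ finrank K (Submodule.span K (S : Set (Dual K V))).dualCoannihilator + #S := by
  rw [← Subspace.finrank_add_finrank_dualCoannihilator_eq, add_comm]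
  exact Nat.add_le_add_left (finrank_span_finset_le_card S) _

section Fourier

variable (e : AddChar K ℂ)

lemma sum_dual_addChar_apply_eq_ite (he : e ≠ 1) (x : V) [Decidable (x = 0)] :
    ∑ f : Dual K V, e (f x) = if x = 0 then (Fintype.card V : ℂ) else 0 := by
  split_ifs with hx
  · simp [hx, Module.card_dual]
  obtain ⟨k, hk⟩ := AddChar.ne_one_iff.1 he
  obtain ⟨g, hg⟩ : ∃ g : Dual K V, g x ≠ 0 := by
    by_contra! h
    exact hx ((forall_dual_apply_eq_zero_iff K x).1 h)
  have h_eval : e.compAddMonoidHom (Dual.eval K V x).toAddMonoidHom ≠ 1 :=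
    AddChar.ne_one_iff.2 ⟨(k / g x) • g, by simpa [hg] using hk⟩
  exact AddChar.sum_eq_zero_of_ne_one h_eval

lemma sum_dual_sum_addChar_apply {ι : Type*} (he : e ≠ 1) (s : Finset ι) (v : ι → V)
    [DecidablePred fun i ↦ v i = 0] :
    ∑ f : Dual K V, ∑ i ∈ s, e (f (v i)) = Fintype.card V * #{i ∈ s | v i = 0} := by
  rw [sum_comm]
  simp_rw [sum_dual_addChar_apply_eq_ite e he, sum_ite, sum_const_zero, add_zero, sum_const,
    nsmul_eq_mul, mul_comm]

def dualFourier (A : Finset V) (f : Dual K V) : ℂ := ∑ a ∈ A, e (f a)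

omit [Fintype K] [Fintype V] in
lemma norm_dualFourier_zero (A : Finset V) : ‖dualFourier e A 0‖ = #A := by
  simp [dualFourier]

omit [Fintype V] in
lemma sq_norm_dualFourier (A : Finset V) (f : Dual K V) :
    (‖dualFourier e A f‖ ^ 2 : ℂ) = ∑ q ∈ A ×ˢ A, e (f (q.1 - q.2)) := by
  rw [← Complex.mul_conj', dualFourier, map_sum, sum_mul_sum, sum_product]
  simp_rw [← AddChar.map_neg_eq_conj, ← AddChar.map_add_eq_mul, map_sub, sub_eq_add_neg]

lemma sum_sq_norm_dualFourier (he : e ≠ 1) (A : Finset V) :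
    ∑ f : Dual K V, ‖dualFourier e A f‖ ^ 2 = Fintype.card V * #A := by
  classical
  have h := sum_dual_sum_addChar_apply e he (A ×ˢ A) fun q ↦ q.1 - q.2
  have h_diag : #{q ∈ A ×ˢ A | q.1 - q.2 = 0} = #A := by
    rw [← diag_card A, diag_eq_filter]
    simp_rw [sub_eq_zero]
  simp_rw [← sq_norm_dualFourier, h_diag] at h
  exact_mod_cast h

omit [Fintype V] in
lemma pow_four_norm_dualFourier_mul (A : Finset V) (f : Dual K V) (x : V) :
    (‖dualFourier e A f‖ ^ 4 : ℂ) * e (f (-x)) =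
      ∑ q ∈ (A ×ˢ A) ×ˢ (A ×ˢ A), e (f (q.1.1 - q.1.2 + (q.2.1 - q.2.2) - x)) := by
  rw [show 4 = 2 * 2 by rfl, pow_mul, sq, sq_norm_dualFourier, sum_mul_sum, ← sum_product',
    sum_mul]
  refine sum_congr rfl fun q _ ↦ ?_
  rw [← AddChar.map_add_eq_mul, ← AddChar.map_add_eq_mul, ← map_add, ← map_add,
    sub_eq_add_neg _ x]

lemma sum_pow_four_norm_dualFourier_mul [DecidableEq V] (he : e ≠ 1) (A : Finset V) (x : V) :
    ∑ f : Dual K V, (‖dualFourier e A f‖ ^ 4 : ℂ) * e (f (-x)) =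
      Fintype.card V * #{q ∈ (A ×ˢ A) ×ˢ (A ×ˢ A) | q.1.1 - q.1.2 + (q.2.1 - q.2.2) - x = 0} := by
  rw [sum_congr rfl fun f _ ↦ pow_four_norm_dualFourier_mul e A f x,
    sum_dual_sum_addChar_apply e he]

noncomputable def largeSpectrum (A : Finset V) (τ : ℝ) : Finset (Dual K V) :=
  {f | τ ≤ ‖dualFourier e A f‖ ^ 2}

lemma card_largeSpectrum_mul_le (he : e ≠ 1) (A : Finset V) (τ : ℝ) :
    #(largeSpectrum e A τ) * τ ≤ Fintype.card V * #A := by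
  calc #(largeSpectrum e A τ) * τ = ∑ _f ∈ largeSpectrum e A τ, τ := by simp
    _ ≤ ∑ f ∈ largeSpectrum e A τ, ‖dualFourier e A f‖ ^ 2 :=
      sum_le_sum fun f hf ↦ (mem_filter.1 hf).2
    _ ≤ ∑ f : Dual K V, ‖dualFourier e A f‖ ^ 2 :=
      sum_le_sum_of_subset_of_nonneg (subset_univ _) fun _ _ _ ↦ by positivity
    _ = Fintype.card V * #A := sum_sq_norm_dualFourier e he A

lemma sub_le_sum_pow_four_norm_dualFourier_mul_re (A : Finset V) {τ : ℝ} (hτ : 0 ≤ τ)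
    (hτA : τ ≤ #A ^ 2) {x : V} (hx : ∀ f ∈ largeSpectrum e A τ, f x = 0) :
    #A ^ 4 - τ * ∑ f : Dual K V, ‖dualFourier e A f‖ ^ 2 ≤
      ∑ f : Dual K V, ‖dualFourier e A f‖ ^ 4 * (e (f (-x))).re := by
  classical
  set S := largeSpectrum e A τ
  have h_large (f) (hf : f ∈ S) :
      ‖dualFourier e A f‖ ^ 4 * (e (f (-x))).re = ‖dualFourier e A f‖ ^ 4 := by
    simp [hx f hf]
  have h_small (f) (hf : f ∉ S) :
      -(τ * ‖dualFourier e A f‖ ^ 2) ≤ ‖dualFourier e A f‖ ^ 4 * (e (f (-x))).re := by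
    have h_re : -1 ≤ (e (f (-x))).re := by
      have := Complex.abs_re_le_norm (e (f (-x)))
      rw [AddChar.norm_apply] at this
      exact (abs_le.1 this).1
    have h_lt : ‖dualFourier e A f‖ ^ 2 < τ := by simpa [S, largeSpectrum] using hf
    nlinarith [sq_nonneg (‖dualFourier e A f‖ ^ 2)]
  have h_zero : (0 : Dual K V) ∈ S := by
    simpa [S, largeSpectrum, norm_dualFourier_zero] using hτA
  have h_trivial : (#A : ℝ) ^ 4 ≤ ∑ f ∈ S, ‖dualFourier e A f‖ ^ 4 := by
    rw [← norm_dualFourier_zero e A]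
    exact single_le_sum (f := fun f ↦ ‖dualFourier e A f‖ ^ 4) (fun f _ ↦ by positivity) h_zero
  have h_compl : ∑ f ∈ Sᶜ, ‖dualFourier e A f‖ ^ 2 ≤ ∑ f : Dual K V, ‖dualFourier e A f‖ ^ 2 :=
    sum_le_sum_of_subset_of_nonneg (subset_univ _) fun _ _ _ ↦ by positivity
  calc #A ^ 4 - τ * ∑ f : Dual K V, ‖dualFourier e A f‖ ^ 2
      ≤ ∑ f ∈ S, ‖dualFourier e A f‖ ^ 4 + ∑ f ∈ Sᶜ, -(τ * ‖dualFourier e A f‖ ^ 2) := by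
        rw [sum_neg_distrib, ← mul_sum]
        nlinarith
    _ ≤ ∑ f : Dual K V, ‖dualFourier e A f‖ ^ 4 * (e (f (-x))).re := by
        rw [← sum_add_sum_compl S]
        gcongr with f hf f hf
        · exact (h_large f hf).ge
        · exact h_small f (mem_compl.1 hf)

lemma mem_add_sub_of_forall_mem_largeSpectrum [DecidableEq V] (he : e ≠ 1) (A : Finset V)
    {τ : ℝ} (hτ : 0 ≤ τ) (hτA : τ * Fintype.card V < #A ^ 3) {x : V}
    (hx : ∀ f ∈ largeSpectrum e A τ, f x = 0) : x ∈ A + A - A - A := by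
  have hA_le : (#A : ℝ) ≤ Fintype.card V := by exact_mod_cast card_le_univ A
  have hA_pos : (0 : ℝ) < #A := by
    have h : (0 : ℝ) < #A ^ 3 := (mul_nonneg hτ (by positivity)).trans_lt hτA
    exact_mod_cast (pow_pos_iff three_ne_zero).1 (by exact_mod_cast h)
  have hτA' : τ ≤ #A ^ 2 := by
    have : τ * #A < #A ^ 2 * #A := by nlinarith [mul_le_mul_of_nonneg_left hA_le hτ]
    exact (lt_of_mul_lt_mul_right this hA_pos.le).le
  have h_pos : 0 < ∑ f : Dual K V, ‖dualFourier e A f‖ ^ 4 * (e (f (-x))).re := by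
    refine lt_of_lt_of_le ?_ (sub_le_sum_pow_four_norm_dualFourier_mul_re e A hτ hτA' hx)
    rw [sum_sq_norm_dualFourier e he]
    nlinarith
  have h_count := congrArg Complex.re (sum_pow_four_norm_dualFourier_mul e he A x)
  simp only [Complex.re_sum, ← Complex.ofReal_pow, Complex.re_ofReal_mul] at h_count
  norm_cast at h_count
  rw [h_count, Nat.cast_pos] at h_pos
  obtain ⟨⟨⟨a, b⟩, c, d⟩, hq⟩ := card_pos.1 (pos_of_mul_pos_right h_pos (Nat.zero_le _))
  simp only [mem_filter, mem_product, sub_eq_zero] at hq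
  obtain ⟨⟨⟨ha, hb⟩, hc, hd⟩, rfl⟩ := hq
  rw [show a - b + (c - d) = a + c - b - d by abel]
  exact sub_mem_sub (sub_mem_sub (add_mem_add ha hc) hb) hd

end Fourier

theorem exists_submodule_subset_add_sub [DecidableEq V] (A : Finset V) (hA : A.Nonempty) :
    ∃ W : Submodule K V, (W : Set V) ⊆ ↑(A + A - A - A) ∧
      (finrank K V : ℝ) ≤ finrank K W + 2 * (Fintype.card V / #A) ^ 2 := by
  obtain ⟨e, he⟩ : ∃ e : AddChar K ℂ, e ≠ 1 :=
    Fintype.exists_ne_of_one_lt_card (by rw [AddChar.card_eq]; exact Fintype.one_lt_card) 1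
  have hV_pos : (0 : ℝ) < Fintype.card V := by exact_mod_cast Fintype.card_pos
  have hA_pos : (0 : ℝ) < #A := by exact_mod_cast hA.card_pos
  set τ : ℝ := #A ^ 3 / (2 * Fintype.card V) with hτ
  set S := largeSpectrum e A τ
  have h_bohr : ∀ x ∈ (Submodule.span K (S : Set (Dual K V))).dualCoannihilator,
      x ∈ A + A - A - A := by
    refine fun x hx ↦ mem_add_sub_of_forall_mem_largeSpectrum e he A (by positivity) ?_
      fun f hf ↦ (Submodule.mem_dualCoannihilator x).1 hx f (Submodule.subset_span hf)
    calc τ * Fintype.card V = #A ^ 3 / 2 := by rw [hτ]; field_simp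
      _ < #A ^ 3 := half_lt_self (by positivity)
  have h_card : (#S : ℝ) ≤ 2 * (Fintype.card V / #A) ^ 2 := by
    have := card_largeSpectrum_mul_le e he A τ
    rw [hτ] at this
    rw [div_pow, mul_div_assoc', le_div_iff₀ (by positivity)]
    field_simp at this
    nlinarith
  have h_rank : (finrank K V : ℝ) ≤
      finrank K (Submodule.span K (S : Set (Dual K V))).dualCoannihilator + #S := by
    exact_mod_cast finrank_le_finrank_dualCoannihilator_span_add_card S
  exact ⟨_, h_bohr, by linarith⟩

end

/-- **Bogolyubov's theorem.** There is an absolute constant `C > 0` such that for every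
prime `p`, every positive integer `n`, and every subset `A` of `F_p^n` of cardinality
`α · p^n` with `α > 0`, the set `2A − 2A = {a + b − c − d : a, b, c, d ∈ A}` contains a
linear subspace of codimension at most `C · α⁻²`. -/
theorem bogolyubov :
    ∃ C : ℝ, 0 < C ∧
      ∀ (p n : ℕ), p.Prime → 0 < n →
        ∀ (A : Set (Fin n → ZMod p)) (α : ℝ), 0 < α →
          (A.ncard : ℝ) = α * (p : ℝ) ^ n →
          ∃ W : Submodule (ZMod p) (Fin n → ZMod p),
            (W : Set (Fin n → ZMod p)) ⊆
              {v | ∃ a ∈ A, ∃ b ∈ A, ∃ c ∈ A, ∃ d ∈ A, v = a + b - c - d} ∧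
            (n : ℝ) - (Module.finrank (ZMod p) W : ℝ) ≤ C * α⁻¹ ^ 2 := by
  classical
  refine ⟨2, two_pos, fun p n hp _ A α hα hA ↦ ?_⟩
  have := Fact.mk hp
  rw [Set.ncard_eq_toFinset_card'] at hA
  have hA_ne : A.toFinset.Nonempty := by
    rw [← card_pos, ← Nat.cast_pos (α := ℝ), hA]
    exact mul_pos hα (pow_pos (Nat.cast_pos.2 hp.pos) n)
  obtain ⟨W, hW_sub, hW_rank⟩ := exists_submodule_subset_add_sub (K := ZMod p) A.toFinset hA_ne
  refine ⟨W, fun v hv ↦ ?_, ?_⟩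
  · have := hW_sub hv
    simp only [coe_sub, coe_add, Set.coe_toFinset] at this
    obtain ⟨_, ⟨_, ⟨a, ha, b, hb, rfl⟩, c, hc, rfl⟩, d, hd, rfl⟩ := this
    exact ⟨a, ha, b, hb, c, hc, d, hd, rfl⟩
  · rw [Fintype.card_fun, ZMod.card, Fintype.card_fin, hA, Module.finrank_fin_fun, Nat.cast_pow,
      div_mul_cancel_right₀ (pow_ne_zero n (Nat.cast_ne_zero.2 hp.ne_zero))] at hW_rank
    linarith
end

section
/- Let P ⊆ F_3^2 × F_3^2 be the set of pairs ((x_1,x_2),(y_1,y_2)) satisfying x_1·y_1^2 + x_2·y_2^2 = 0 and x_1^2·y_1 + x_2^2·y_2 = 0 in F_3. Then P is transverse but P is not a bilinear set. -/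
/-!
Each fibre of `P` (in either direction) is a linear subspace of `F_3^2`, which is exactly
transversality; and `P` is symmetric under `(x, y) ↦ (y, x)`, so one direction suffices.
A bilinear set contains every point `(z, w)` with `z ∈ W₁`, `w ∈ W₂` whose tensor `z ⊗ w` is a
linear combination of tensors of its points. In `F_3^2 ⊗ F_3^2`,
`(1,1) ⊗ (1,1) = 2·(0,1) ⊗ (1,0) + 2·(1,0) ⊗ (0,1) + (1,2) ⊗ (1,2)`, the three pairs on the
right lie in `P`, and `(1,1)` lies in both projections of `P`, yet `((1,1),(1,1)) ∉ P`.
-/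

/-- The vertical sum `A +V A`. -/
def vSum {V1 V2 : Type*} [Add V2] (A : Set (V1 × V2)) : Set (V1 × V2) :=
  {q | ∃ y₁ y₂, (q.1, y₁) ∈ A ∧ (q.1, y₂) ∈ A ∧ q.2 = y₁ + y₂}

/-- The horizontal sum `A +H A`. -/
def hSum {V1 V2 : Type*} [Add V1] (A : Set (V1 × V2)) : Set (V1 × V2) :=
  {q | ∃ x₁ x₂, (x₁, q.2) ∈ A ∧ (x₂, q.2) ∈ A ∧ q.1 = x₁ + x₂}

/-- A set is transverse when it is stable under vertical and horizontal sums. -/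
def IsTransverse {V1 V2 : Type*} [Add V1] [Add V2] (A : Set (V1 × V2)) : Prop :=
  vSum A = A ∧ hSum A = A

/-- A subset of `F_p^n × F_p^n` is bilinear when it is the common zero set, on a product of
subspaces `W₁ × W₂`, of finitely many bilinear forms. -/
def IsBilinearSet (p n : ℕ) (P : Set ((Fin n → ZMod p) × (Fin n → ZMod p))) : Prop :=
  ∃ (W₁ W₂ : Submodule (ZMod p) (Fin n → ZMod p)) (r : ℕ)
    (Q : Fin r → ((Fin n → ZMod p) →ₗ[ZMod p] (Fin n → ZMod p) →ₗ[ZMod p] ZMod p)),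
    P = {q | q.1 ∈ W₁ ∧ q.2 ∈ W₂ ∧ ∀ i, Q i q.1 q.2 = 0}

open TensorProduct

lemma vSum_eq_self {V1 V2 : Type*} [AddZeroClass V2] {A : Set (V1 × V2)}
    (hzero : ∀ x y, (x, y) ∈ A → (x, 0) ∈ A)
    (hadd : ∀ x y₁ y₂, (x, y₁) ∈ A → (x, y₂) ∈ A → (x, y₁ + y₂) ∈ A) : vSum A = A := by
  ext ⟨x, y⟩
  constructor
  · rintro ⟨y₁, y₂, h₁, h₂, rfl⟩
    exact hadd x y₁ y₂ h₁ h₂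
  · intro h
    exact ⟨y, 0, h, hzero x y h, (add_zero y).symm⟩

lemma hSum_eq_self {V1 V2 : Type*} [AddZeroClass V1] {A : Set (V1 × V2)}
    (hzero : ∀ x y, (x, y) ∈ A → (0, y) ∈ A)
    (hadd : ∀ x₁ x₂ y, (x₁, y) ∈ A → (x₂, y) ∈ A → (x₁ + x₂, y) ∈ A) : hSum A = A := by
  ext ⟨x, y⟩
  constructor
  · rintro ⟨x₁, x₂, h₁, h₂, rfl⟩
    exact hadd x₁ x₂ y h₁ h₂
  · intro h
    exact ⟨x, 0, h, hzero x y h, (add_zero x).symm⟩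

lemma IsBilinearSet.mem_of_tmul_eq_sum {p n : ℕ} {P : Set ((Fin n → ZMod p) × (Fin n → ZMod p))}
    (hP : IsBilinearSet p n P) {ι : Type*} [Fintype ι] (c : ι → ZMod p)
    (a b : ι → Fin n → ZMod p) (hab : ∀ i, (a i, b i) ∈ P) {z w : Fin n → ZMod p}
    (hz : ∃ y, (z, y) ∈ P) (hw : ∃ x, (x, w) ∈ P)
    (htensor : z ⊗ₜ[ZMod p] w = ∑ i, c i • a i ⊗ₜ[ZMod p] b i) : (z, w) ∈ P := by
  obtain ⟨W₁, W₂, r, Q, rfl⟩ := hP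
  obtain ⟨y, hz, -⟩ := hz
  obtain ⟨x, -, hw, -⟩ := hw
  refine ⟨hz, hw, fun j => ?_⟩
  calc Q j z w = lift (Q j) (z ⊗ₜ w) := (lift.tmul z w).symm
    _ = ∑ i, c i • Q j (a i) (b i) := by simp [htensor]
    _ = 0 := by simp [(hab _).2.2 j]

def cubicSet : Set ((Fin 2 → ZMod 3) × (Fin 2 → ZMod 3)) :=
  {q | q.1 0 * (q.2 0) ^ 2 + q.1 1 * (q.2 1) ^ 2 = 0 ∧
    (q.1 0) ^ 2 * q.2 0 + (q.1 1) ^ 2 * q.2 1 = 0}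

lemma swap_mem_cubicSet {q : (Fin 2 → ZMod 3) × (Fin 2 → ZMod 3)} :
    q.swap ∈ cubicSet ↔ q ∈ cubicSet := by
  simp only [cubicSet, Set.mem_ofPred_eq, Prod.fst_swap, Prod.snd_swap]
  constructor <;> rintro ⟨h₁, h₂⟩ <;> exact ⟨by linear_combination h₂, by linear_combination h₁⟩

lemma zero_right_mem_cubicSet (x : Fin 2 → ZMod 3) : (x, 0) ∈ cubicSet := by
  simp [cubicSet]

lemma zero_left_mem_cubicSet (y : Fin 2 → ZMod 3) : (0, y) ∈ cubicSet := by
  simp [cubicSet]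

lemma add_right_mem_cubicSet {x y₁ y₂ : Fin 2 → ZMod 3} (h₁ : (x, y₁) ∈ cubicSet)
    (h₂ : (x, y₂) ∈ cubicSet) : (x, y₁ + y₂) ∈ cubicSet := by
  revert x y₁ y₂
  simp only [cubicSet, Set.mem_ofPred_eq]
  decide

lemma add_left_mem_cubicSet {x₁ x₂ y : Fin 2 → ZMod 3} (h₁ : (x₁, y) ∈ cubicSet)
    (h₂ : (x₂, y) ∈ cubicSet) : (x₁ + x₂, y) ∈ cubicSet :=
  swap_mem_cubicSet.1 <| add_right_mem_cubicSet (swap_mem_cubicSet.2 h₁) (swap_mem_cubicSet.2 h₂)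

lemma isTransverse_cubicSet : IsTransverse cubicSet :=
  ⟨vSum_eq_self (fun x _ _ => zero_right_mem_cubicSet x) fun _ _ _ => add_right_mem_cubicSet,
    hSum_eq_self (fun _ y _ => zero_left_mem_cubicSet y) fun _ _ _ => add_left_mem_cubicSet⟩

lemma tmul_one_one_eq : (![1, 1] : Fin 2 → ZMod 3) ⊗ₜ[ZMod 3] (![1, 1] : Fin 2 → ZMod 3) =
    (2 : ZMod 3) • ![0, 1] ⊗ₜ ![1, 0] + (2 : ZMod 3) • ![1, 0] ⊗ₜ ![0, 1] +
      ![1, 2] ⊗ₜ ![1, 2] := by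
  have e₁ : (![1, 1] : Fin 2 → ZMod 3) = ![1, 0] + ![0, 1] := by decide
  have e₂ : (![1, 2] : Fin 2 → ZMod 3) = ![1, 0] + (2 : ZMod 3) • ![0, 1] := by decide
  rw [e₁, e₂]
  simp only [add_tmul, tmul_add, ← smul_tmul', tmul_smul, smul_add]
  match_scalars <;> decide

lemma not_isBilinearSet_cubicSet : ¬ IsBilinearSet 3 2 cubicSet := by
  intro hP
  have hmem : (![1, 1], ![1, 1]) ∈ cubicSet :=
    hP.mem_of_tmul_eq_sum ![2, 2, 1] ![![0, 1], ![1, 0], ![1, 2]] ![![1, 0], ![0, 1], ![1, 2]]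
      (by simp only [cubicSet, Set.mem_ofPred_eq]; decide) ⟨0, zero_right_mem_cubicSet _⟩
      ⟨0, zero_left_mem_cubicSet _⟩ (by simpa [Fin.sum_univ_three] using tmul_one_one_eq)
  revert hmem
  simp only [cubicSet, Set.mem_ofPred_eq]
  decide

/-- The set `P ⊆ F_3^2 × F_3^2` of pairs `((x₁,x₂),(y₁,y₂))` with
`x₁y₁² + x₂y₂² = 0` and `x₁²y₁ + x₂²y₂ = 0` is transverse but not bilinear. -/
theorem transverse_not_bilinear_example :
    IsTransverse {q : (Fin 2 → ZMod 3) × (Fin 2 → ZMod 3) |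
        q.1 0 * (q.2 0) ^ 2 + q.1 1 * (q.2 1) ^ 2 = 0 ∧
        (q.1 0) ^ 2 * q.2 0 + (q.1 1) ^ 2 * q.2 1 = 0} ∧
    ¬ IsBilinearSet 3 2 {q : (Fin 2 → ZMod 3) × (Fin 2 → ZMod 3) |
        q.1 0 * (q.2 0) ^ 2 + q.1 1 * (q.2 1) ^ 2 = 0 ∧
        (q.1 0) ^ 2 * q.2 0 + (q.1 1) ^ 2 * q.2 1 = 0} :=
  ⟨isTransverse_cubicSet, not_isBilinearSet_cubicSet⟩
end

section
/- For every prime p ≥ 5 and every integer n ≥ 2, there exists a transverse set P ⊆ F_p^n × F_p^n that is not a bilinear set and such that for every x ∈ F_p^n the vertical fiber P_{x·} contains a hyperplane of F_p^n. -/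
/-!
Let `ν` be the map of `K²` that exchanges `(a, a)` and `(a, 2a)` for `a ≠ 0` and fixes every other
vector: it is homogeneous and involutive, hence permutes the lines through `0`, but it is not
additive. Take `P = {(x, y) | (y₀, y₁) ∥ ν(x₀, x₁)}`. For fixed `x` this is one linear equation in
`y`, and for fixed `y ≠ 0` the admissible `(x₀, x₁)` form the line `ν(K · (y₀, y₁))`, so `P` is
transverse and its vertical fibers contain hyperplanes. When `3 ≠ 0`, the zero set of a family of
bilinear forms containing `(e₀, e₀)`, `(e₁, e₁)`, `(e₀ + e₁, e₀ + 2e₁)` and `(e₀ + 2e₁, e₀ + e₁)`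
contains `(e₀ + e₁, e₀ + e₁)`; `P` contains the first four pairs (as `ν` swaps `e₀ + e₁` and
`e₀ + 2e₁`) but not the last.
-/

open Module LinearMap Submodule Function

section SumsOfSets

variable {V₁ V₂ : Type*}

theorem vSum_eq_self_s4 [AddZeroClass V₂] {A : Set (V₁ × V₂)} (zero_mem : ∀ x, (x, 0) ∈ A)
    (add_mem : ∀ x y₁ y₂, (x, y₁) ∈ A → (x, y₂) ∈ A → (x, y₁ + y₂) ∈ A) : vSum A = A := by
  ext ⟨x, y⟩
  constructor
  · rintro ⟨y₁, y₂, h₁, h₂, rfl : y = _⟩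
    exact add_mem x y₁ y₂ h₁ h₂
  · exact fun h ↦ ⟨y, 0, h, zero_mem x, (add_zero y).symm⟩

theorem hSum_eq_self_s4 [AddZeroClass V₁] {A : Set (V₁ × V₂)} (zero_mem : ∀ y, (0, y) ∈ A)
    (add_mem : ∀ x₁ x₂ y, (x₁, y) ∈ A → (x₂, y) ∈ A → (x₁ + x₂, y) ∈ A) : hSum A = A := by
  ext ⟨x, y⟩
  constructor
  · rintro ⟨x₁, x₂, h₁, h₂, rfl : x = _⟩
    exact add_mem x₁ x₂ y h₁ h₂
  · exact fun h ↦ ⟨x, 0, h, zero_mem y, (add_zero x).symm⟩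

end SumsOfSets

theorem Submodule.apply_mem_span_singleton_iff {R M : Type*} [Semiring R] [AddCommMonoid M]
    [Module R M] {ν : M → M} (hν : Involutive ν) (hsmul : ∀ (t : R) v, ν (t • v) = t • ν v)
    {v w : M} : ν v ∈ R ∙ w ↔ v ∈ R ∙ ν w := by
  have key : ∀ v w, ν v ∈ R ∙ w → v ∈ R ∙ ν w := by
    simp only [mem_span_singleton]
    rintro v w ⟨t, ht⟩
    exact ⟨t, by rw [← hsmul, ht, hν]⟩
  refine ⟨key v w, fun h ↦ ?_⟩
  simpa only [hν _] using key (ν v) (ν w) (by rwa [hν])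

theorem LinearMap.prod_proj_surjective {ι R : Type*} [Semiring R] {i j : ι} (hij : i ≠ j) :
    Surjective ((proj i).prod (proj j) : (ι → R) →ₗ[R] R × R) := by
  classical
  rintro ⟨a, b⟩
  exact ⟨Pi.single i a + Pi.single j b, by simp [hij, hij.symm]⟩

theorem LinearMap.apply_add_add_eq_zero {R M N : Type*} [CommRing R] [NoZeroDivisors R]
    [AddCommGroup M] [Module R M] [AddCommGroup N] [Module R N] (B : M →ₗ[R] N →ₗ[R] R)
    (h3 : (3 : R) ≠ 0) {u v : M} {u' v' : N} (h₀ : B u u' = 0) (h₁ : B v v' = 0)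
    (h₂ : B (u + v) (u' + (2 : R) • v') = 0) (h₃ : B (u + (2 : R) • v) (u' + v') = 0) :
    B (u + v) (u' + v') = 0 := by
  simp only [map_add, map_smul, add_apply, smul_apply, smul_eq_mul] at h₂ h₃ ⊢
  have h : (3 : R) * (B u v' + B v u') = 0 := by linear_combination h₂ + h₃ - 2 * h₀ - 4 * h₁
  rw [h₀, h₁, zero_add, add_zero, add_comm, (mul_eq_zero.mp h).resolve_left h3]

theorem Module.Dual.exists_finrank_add_one_eq_and_le_ker {K V : Type*} [Field K]
    [AddCommGroup V] [Module K V] [FiniteDimensional K V] [Nontrivial V] (f : Dual K V) :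
    ∃ H : Submodule K V, finrank K H + 1 = finrank K V ∧ H ≤ ker f := by
  obtain ⟨g, hg, hle⟩ : ∃ g : Dual K V, g ≠ 0 ∧ ker g ≤ ker f := by
    rcases eq_or_ne f 0 with rfl | hf
    · obtain ⟨g, hg⟩ := exists_ne (0 : Dual K V)
      exact ⟨g, hg, by simp⟩
    · exact ⟨f, hf, le_rfl⟩
  exact ⟨ker g, finrank_ker_add_one_of_ne_zero hg, hle⟩

section Wedge

def wedge {R : Type*} [CommRing R] : R × R →ₗ[R] R × R →ₗ[R] R :=
  mk₂ R (fun v w ↦ v.1 * w.2 - v.2 * w.1)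
    (by intros; simp only [Prod.fst_add, Prod.snd_add]; ring)
    (by intros; simp only [Prod.smul_fst, Prod.smul_snd, smul_eq_mul]; ring)
    (by intros; simp only [Prod.fst_add, Prod.snd_add]; ring)
    (by intros; simp only [Prod.smul_fst, Prod.smul_snd, smul_eq_mul]; ring)

theorem wedge_apply {R : Type*} [CommRing R] (v w : R × R) : wedge v w = v.1 * w.2 - v.2 * w.1 :=
  rfl

variable {K : Type*} [Field K]

theorem wedge_eq_zero_iff_mem_span {v w : K × K} (hw : w ≠ 0) : wedge v w = 0 ↔ v ∈ K ∙ w := by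
  rw [wedge_apply, mem_span_singleton]
  obtain ⟨c, d⟩ := v
  obtain ⟨a, b⟩ := w
  simp only [Prod.smul_mk, smul_eq_mul, Prod.mk.injEq]
  constructor
  · intro h
    by_cases ha : a = 0
    · have hb : b ≠ 0 := by rintro rfl; exact hw (by simp [ha])
      refine ⟨d / b, ?_, by field_simp⟩
      field_simp
      simp_all
    · refine ⟨c / a, by field_simp, ?_⟩
      rw [div_mul_eq_mul_div, div_eq_iff ha]
      linear_combination h
  · rintro ⟨t, rfl, rfl⟩
    ring

theorem wedge_apply_add_eq_zero {ν : K × K → K × K} (hν : Involutive ν)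
    (hsmul : ∀ (t : K) v, ν (t • v) = t • ν v) {v₁ v₂ w : K × K} (h₁ : wedge (ν v₁) w = 0)
    (h₂ : wedge (ν v₂) w = 0) : wedge (ν (v₁ + v₂)) w = 0 := by
  rcases eq_or_ne w 0 with rfl | hw
  · simp
  simp only [wedge_eq_zero_iff_mem_span hw, apply_mem_span_singleton_iff hν hsmul] at *
  exact add_mem h₁ h₂

variable {V W : Type*} [AddCommGroup V] [Module K V] [AddCommGroup W] [Module K W]

def parallelSet (ν : K × K → K × K) (π : V →ₗ[K] K × K) (ρ : W →ₗ[K] K × K) : Set (V × W) :=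
  {q | wedge (ν (π q.1)) (ρ q.2) = 0}

theorem isTransverse_parallelSet {ν : K × K → K × K} (hν : Involutive ν)
    (hsmul : ∀ (t : K) v, ν (t • v) = t • ν v) (π : V →ₗ[K] K × K) (ρ : W →ₗ[K] K × K) :
    IsTransverse (parallelSet ν π ρ) := by
  have hν₀ : ν 0 = 0 := by simpa using hsmul 0 0
  refine ⟨vSum_eq_self_s4 (fun x ↦ ?_) (fun x y₁ y₂ h₁ h₂ ↦ ?_),
    hSum_eq_self_s4 (fun y ↦ ?_) (fun x₁ x₂ y h₁ h₂ ↦ ?_)⟩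
  · simp [parallelSet]
  · simp_all [parallelSet]
  · simp [parallelSet, hν₀]
  · simpa [parallelSet] using wedge_apply_add_eq_zero hν hsmul h₁ h₂

theorem exists_finrank_add_one_eq_and_subset_parallelSet [FiniteDimensional K W] [Nontrivial W]
    (ν : K × K → K × K) (π : V →ₗ[K] K × K) (ρ : W →ₗ[K] K × K) (x : V) :
    ∃ H : Submodule K W, finrank K H + 1 = finrank K W ∧
      (H : Set W) ⊆ {y | (x, y) ∈ parallelSet ν π ρ} := by
  obtain ⟨H, hH, hle⟩ := Dual.exists_finrank_add_one_eq_and_le_ker ((wedge (ν (π x))).comp ρ)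
  exact ⟨H, hH, fun y hy ↦ hle hy⟩

end Wedge

section LineSwap

variable {K : Type*} [Field K] [DecidableEq K]

variable (K) in
def lineSwap (v : K × K) : K × K :=
  if v.1 ≠ 0 ∧ v.2 = v.1 then (v.1, 2 * v.1)
  else if v.1 ≠ 0 ∧ v.2 = 2 * v.1 then (v.1, v.1)
  else v

theorem lineSwap_self {a : K} (ha : a ≠ 0) : lineSwap K (a, a) = (a, 2 * a) := by
  simp [lineSwap, ha]

theorem lineSwap_two_mul {a : K} (ha : a ≠ 0) : lineSwap K (a, 2 * a) = (a, a) := by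
  have h2 : 2 * a ≠ a := fun h ↦ ha (by linear_combination h)
  simp [lineSwap, ha, h2]

theorem lineSwap_of_ne {v : K × K} (h₁ : v.2 ≠ v.1) (h₂ : v.2 ≠ 2 * v.1) : lineSwap K v = v := by
  simp [lineSwap, h₁, h₂]

theorem lineSwap_of_fst_eq_zero {v : K × K} (h : v.1 = 0) : lineSwap K v = v := by
  simp [lineSwap, h]

theorem lineSwap_involutive : Involutive (lineSwap K) := by
  rintro ⟨a, b⟩
  rcases eq_or_ne a 0 with rfl | ha
  · simp [lineSwap_of_fst_eq_zero]
  by_cases h₁ : b = a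
  · rw [h₁, lineSwap_self ha, lineSwap_two_mul ha]
  by_cases h₂ : b = 2 * a
  · rw [h₂, lineSwap_two_mul ha, lineSwap_self ha]
  · have h := lineSwap_of_ne (v := (a, b)) h₁ h₂
    rw [h, h]

theorem lineSwap_smul (t : K) (v : K × K) : lineSwap K (t • v) = t • lineSwap K v := by
  obtain ⟨a, b⟩ := v
  rcases eq_or_ne t 0 with rfl | ht
  · simp [lineSwap]
  have e₁ : t * b = t * a ↔ b = a := mul_right_inj' ht
  have e₂ : t * b = 2 * (t * a) ↔ b = 2 * a := by rw [mul_left_comm]; exact mul_right_inj' ht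
  simp only [lineSwap, Prod.smul_mk, smul_eq_mul, ne_eq, mul_eq_zero, ht, false_or, e₁, e₂]
  split_ifs <;> simp [mul_left_comm]

variable {V W ι : Type*} [AddCommGroup V] [Module K V] [AddCommGroup W] [Module K W]

theorem parallelSet_lineSwap_ne (h2 : (2 : K) ≠ 0) (h3 : (3 : K) ≠ 0) {π : V →ₗ[K] K × K}
    {ρ : W →ₗ[K] K × K} (hπ : Surjective π) (hρ : Surjective ρ) (W₁ : Submodule K V)
    (W₂ : Submodule K W) (Q : ι → V →ₗ[K] W →ₗ[K] K) :
    parallelSet (lineSwap K) π ρ ≠ {q | q.1 ∈ W₁ ∧ q.2 ∈ W₂ ∧ ∀ i, Q i q.1 q.2 = 0} := by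
  intro hP
  have mem (x : V) (y : W) :
      wedge (lineSwap K (π x)) (ρ y) = 0 ↔ x ∈ W₁ ∧ y ∈ W₂ ∧ ∀ i, Q i x y = 0 :=
    Set.ext_iff.mp hP (x, y)
  obtain ⟨u, hu⟩ := hπ (1, 0)
  obtain ⟨v, hv⟩ := hπ (0, 1)
  obtain ⟨u', hu'⟩ := hρ (1, 0)
  obtain ⟨v', hv'⟩ := hρ (0, 1)
  obtain ⟨-, -, h₀⟩ := (mem u u').mp <| by
    simp [hu, hu', lineSwap_of_ne (K := K) (v := (1, 0)) (by simp) (by simpa using h2.symm),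
      wedge_apply]
  obtain ⟨-, -, h₁⟩ := (mem v v').mp <| by simp [hv, hv', lineSwap_of_fst_eq_zero, wedge_apply]
  obtain ⟨hW₁, -, h₂⟩ := (mem (u + v) (u' + (2 : K) • v')).mp <| by
    simp [hu, hv, hu', hv', lineSwap_self (one_ne_zero (α := K)), wedge_apply]
  obtain ⟨-, hW₂, h₃⟩ := (mem (u + (2 : K) • v) (u' + v')).mp <| by
    simpa [hu, hv, hu', hv', wedge_apply] using congrArg (wedge · (1, 1))
      (lineSwap_two_mul (one_ne_zero (α := K)))
  have := (mem (u + v) (u' + v')).mpr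
    ⟨hW₁, hW₂, fun i ↦ (Q i).apply_add_add_eq_zero h3 (h₀ i) (h₁ i) (h₂ i) (h₃ i)⟩
  simp only [map_add, hu, hv, hu', hv', Prod.mk_add_mk, add_zero, zero_add, mul_one,
    lineSwap_self (one_ne_zero (α := K)), wedge_apply] at this
  exact one_ne_zero (by linear_combination -this : (1 : K) = 0)

end LineSwap

/-- For every prime `p ≥ 5` and every `n ≥ 2` there is a transverse, non-bilinear set
`P ⊆ F_p^n × F_p^n` all of whose vertical fibers contain a hyperplane. -/
theorem exists_transverse_not_bilinear_hyperplane_fibers (p n : ℕ) (hp : p.Prime)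
    (hp5 : 5 ≤ p) (hn : 2 ≤ n) :
    ∃ P : Set ((Fin n → ZMod p) × (Fin n → ZMod p)),
      IsTransverse P ∧ ¬ IsBilinearSet p n P ∧
      ∀ x : Fin n → ZMod p, ∃ H : Submodule (ZMod p) (Fin n → ZMod p),
        Module.finrank (ZMod p) H + 1 = n ∧ (H : Set (Fin n → ZMod p)) ⊆ {y | (x, y) ∈ P} := by
  have : Fact p.Prime := ⟨hp⟩
  have : NeZero n := ⟨by omega⟩
  have hcast (k : ℕ) (hk : 0 < k) (hkp : k < p) : (k : ZMod p) ≠ 0 := by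
    rw [Ne, ZMod.natCast_eq_zero_iff]
    exact Nat.not_dvd_of_pos_of_lt hk hkp
  have h01 : (0 : Fin n) ≠ 1 := by
    rw [Ne, Fin.ext_iff, Fin.val_zero, Fin.val_one', Nat.mod_eq_of_lt (by omega)]
    exact zero_ne_one
  let π : (Fin n → ZMod p) →ₗ[ZMod p] ZMod p × ZMod p := (proj 0).prod (proj 1)
  have hπ : Surjective π := prod_proj_surjective h01
  refine ⟨parallelSet (lineSwap (ZMod p)) π π,
    isTransverse_parallelSet lineSwap_involutive lineSwap_smul π π, ?_, fun x ↦ ?_⟩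
  · rintro ⟨W₁, W₂, r, Q, hP⟩
    exact parallelSet_lineSwap_ne (by exact_mod_cast hcast 2 (by omega) (by omega))
      (by exact_mod_cast hcast 3 (by omega) (by omega)) hπ hπ W₁ W₂ Q hP
  · simpa using exists_finrank_add_one_eq_and_subset_parallelSet (lineSwap (ZMod p)) π π x
end

section
/- For every prime p and every integer n ≥ 11 (and also for every prime p ≥ 13 and every integer n ≥ 2), there exists a transverse set P ⊆ F_p^n × F_p^n that is not a bilinear set and such that P_{0·} = F_p^n and, for every nonzero x ∈ F_p^n, the vertical fiber P_{x·} is a linear subspace of dimension exactly 1. -/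
/-!
For a permutation `f` of the lines of `V = F_p^n`, let `P_f` consist of the pairs `(x, y)` with
`x = 0`, `y = 0` or `[y] = f [x]`. Its vertical fibres are `V` over `0` and the lines `f [x]`;
as `f` is injective, its horizontal fibres are `{0}` or lines, so `P_f` is transverse. A bilinear
set containing both axes is cut out by bilinear forms alone, so `P_f` is not bilinear as soon as
no nonzero bilinear form `B` vanishes on it.

Such an `f` permutes a few special lines and fixes all others, so that `B(x, x) = 0` off the
special lines and `B(x, y) = 0` when `[y] = f [x]`. If `2, 3 ≠ 0`, swapping `[e_i + 2 e_j]` with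
`[e_j + 2 e_i]` forces `B = 0`. In general (`n ≥ 7`) the special lines are spanned by the
indicator vectors `1_A`, moved by a rotation `r` of the coordinates when `|A| ∈ {3, 4}`, by a
transposition when `|A| ∈ {5, 6}`, and fixed otherwise. Then `B` is alternating, and comparing
`B(1_A, 1_{r A}) = 0` for sets of consecutive sizes shows that `B(e_a, e_{r b}) + B(e_b, e_{r a})`
is a constant, which the transposition forces to vanish. So `B(e_a, e_{r b}) = B(e_{r a}, e_b)`
and `B(e_a, e_{r a}) = 0`; since `B(e_a, e_{r^(2k) a}) = B(e_{r^k a}, e_{r^k a})` and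
`B(e_a, e_{r^(2k+1) a}) = B(e_{r^k a}, e_{r^(k+1) a})`, the transitivity of `r` gives `B = 0`.
-/

open scoped LinearAlgebra.Projectivization
open Projectivization

section LineGraph

variable {K V : Type*} [Field K] [AddCommGroup V] [Module K V]

theorem Projectivization.mem_submodule_iff_mk_eq (ℓ : ℙ K V) {v : V} (hv : v ≠ 0) :
    v ∈ ℓ.submodule ↔ mk K v hv = ℓ := by
  conv_rhs => rw [← ℓ.mk_rep]
  rw [ℓ.submodule_eq, Submodule.mem_span_singleton, mk_eq_mk_iff']

theorem Projectivization.mk_add_eq_of_mk_eq {u v : V} {hu : u ≠ 0} {hv : v ≠ 0}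
    (h : mk K u hu = mk K v hv) (huv : u + v ≠ 0) : mk K (u + v) huv = mk K u hu := by
  obtain ⟨a, rfl⟩ := (mk_eq_mk_iff' K _ _ hu hv).1 h
  rw [h, mk_eq_mk_iff']
  exact ⟨a + 1, by rw [add_smul, one_smul]⟩

/-- The pairs `(x, y)` with `x = 0`, `y = 0` or `f [x] = [y]`. -/
def lineGraph (f : ℙ K V → ℙ K V) : Set (V × V) :=
  {q | ∀ (h₁ : q.1 ≠ 0) (h₂ : q.2 ≠ 0), f (mk K q.1 h₁) = mk K q.2 h₂}

variable {f : ℙ K V → ℙ K V}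

theorem zero_left_mem_lineGraph (y : V) : ((0 : V), y) ∈ lineGraph f :=
  fun h => absurd rfl h

theorem zero_right_mem_lineGraph (x : V) : (x, (0 : V)) ∈ lineGraph f :=
  fun _ h => absurd rfl h

theorem setOf_mem_lineGraph {x : V} (hx : x ≠ 0) :
    {y | (x, y) ∈ lineGraph f} = (f (mk K x hx)).submodule := by
  ext y
  rcases eq_or_ne y 0 with rfl | hy
  · simp [zero_right_mem_lineGraph]
  · simp only [SetLike.mem_coe, mem_submodule_iff_mk_eq _ hy, lineGraph]
    exact ⟨fun h => (h hx hy).symm, fun h _ _ => h.symm⟩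

theorem add_right_mem_lineGraph {x y₁ y₂ : V} (h₁ : (x, y₁) ∈ lineGraph f)
    (h₂ : (x, y₂) ∈ lineGraph f) : (x, y₁ + y₂) ∈ lineGraph f := by
  rcases eq_or_ne y₁ 0 with rfl | hy₁
  · rwa [zero_add]
  rcases eq_or_ne y₂ 0 with rfl | hy₂
  · rwa [add_zero]
  intro hx hy
  rw [h₁ hx hy₁, mk_add_eq_of_mk_eq ((h₁ hx hy₁).symm.trans (h₂ hx hy₂))]

theorem add_left_mem_lineGraph (hf : Function.Injective f) {x₁ x₂ y : V}
    (h₁ : (x₁, y) ∈ lineGraph f) (h₂ : (x₂, y) ∈ lineGraph f) :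
    (x₁ + x₂, y) ∈ lineGraph f := by
  rcases eq_or_ne x₁ 0 with rfl | hx₁
  · rwa [zero_add]
  rcases eq_or_ne x₂ 0 with rfl | hx₂
  · rwa [add_zero]
  intro hx hy
  rw [mk_add_eq_of_mk_eq (hf ((h₁ hx₁ hy).trans (h₂ hx₂ hy).symm))]
  exact h₁ hx₁ hy

theorem isTransverse_lineGraph (hf : Function.Injective f) : IsTransverse (lineGraph f) := by
  constructor <;> ext ⟨x, y⟩
  · refine ⟨fun ⟨y₁, y₂, h₁, h₂, hy⟩ => ?_, fun h => ⟨y, 0, h, zero_right_mem_lineGraph x, ?_⟩⟩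
    · exact (show y = y₁ + y₂ from hy) ▸ add_right_mem_lineGraph h₁ h₂
    · simp
  · refine ⟨fun ⟨x₁, x₂, h₁, h₂, hx⟩ => ?_, fun h => ⟨x, 0, h, zero_left_mem_lineGraph y, ?_⟩⟩
    · exact (show x = x₁ + x₂ from hx) ▸ add_left_mem_lineGraph hf h₁ h₂
    · simp

theorem lineGraph_ne_univ (hV : 1 < Module.finrank K V) :
    lineGraph f ≠ Set.univ := by
  have : Nontrivial V := Module.nontrivial_of_finrank_pos (R := K) (by omega)
  obtain ⟨x, hx⟩ := exists_ne (0 : V)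
  have hne : (f (mk K x hx)).submodule ≠ ⊤ := fun h => by
    have := (f (mk K x hx)).finrank_submodule
    rw [h, finrank_top] at this
    omega
  obtain ⟨y, hy⟩ := SetLike.exists_not_mem_of_ne_top _ hne
  intro huniv
  apply hy
  rw [← SetLike.mem_coe, ← setOf_mem_lineGraph hx, huniv]
  trivial

end LineGraph

def IsBilinearDense (K : Type*) {V : Type*} [CommRing K] [AddCommGroup V] [Module K V]
    (P : Set (V × V)) : Prop :=
  ∀ B : V →ₗ[K] V →ₗ[K] K, (∀ q ∈ P, B q.1 q.2 = 0) → B = 0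

theorem not_isBilinearSet_of_isBilinearDense {p n : ℕ}
    {P : Set ((Fin n → ZMod p) × (Fin n → ZMod p))}
    (hP : IsBilinearDense (ZMod p) P) (hleft : ∀ x, (x, 0) ∈ P) (hright : ∀ y, (0, y) ∈ P)
    (hne : P ≠ Set.univ) : ¬ IsBilinearSet p n P := by
  rintro ⟨W₁, W₂, r, Q, rfl⟩
  have hQ : ∀ i, Q i = 0 := fun i => hP (Q i) fun q hq => hq.2.2 i
  refine hne (Set.eq_univ_of_forall fun q => ⟨(hleft q.1).1, (hright q.2).2.1, fun i => ?_⟩)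
  rw [hQ i]
  rfl

section SpecialLines

variable {K V S : Type*} [Field K] [AddCommGroup V] [Module K V]
  {v : S → V} {hv : ∀ s, v s ≠ 0}

def lineEmbedding (v : S → V) (hv : ∀ s, v s ≠ 0)
    (hinj : Function.Injective fun s => mk K (v s) (hv s)) : S ↪ ℙ K V :=
  ⟨_, hinj⟩

variable (hinj : Function.Injective fun s => mk K (v s) (hv s)) (σ : Equiv.Perm S)

theorem mem_lineGraph_viaEmbedding (s : S) :
    (v s, v (σ s)) ∈ lineGraph (σ.viaEmbedding (lineEmbedding v hv hinj)) :=
  fun _ _ => σ.viaEmbedding_apply (lineEmbedding v hv hinj) s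

theorem self_mem_lineGraph_viaEmbedding {x : V} (hx : x ≠ 0)
    (hxv : ∀ s, mk K x hx ≠ mk K (v s) (hv s)) :
    (x, x) ∈ lineGraph (σ.viaEmbedding (lineEmbedding v hv hinj)) := by
  intro _ _
  refine σ.viaEmbedding_apply_of_notMem _ _ ?_
  rintro ⟨s, hs⟩
  exact hxv s hs.symm

end SpecialLines

section Coordinates

variable {K I : Type*} [Field K] [DecidableEq I]

theorem single_add_smul_single_eq_smul {i j k l : I} (hij : i ≠ j) (hkl : k ≠ l)
    {s t c : K} (ht : t ≠ 0)
    (h : Pi.single i 1 + s • Pi.single j 1 = c • (Pi.single k 1 + t • Pi.single l (1 : K))) :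
    (i = k ∧ j = l ∧ s = t) ∨ (i = l ∧ j = k ∧ s * t = 1) := by
  have hx : ∀ x, (if x = i then 1 else 0) + s * (if x = j then 1 else 0) =
      c * ((if x = k then 1 else 0) + t * (if x = l then 1 else 0)) := fun x => by
    simpa [Pi.single_apply] using congrFun h x
  have hi := hx i
  have hk := hx k
  have hl := hx l
  rcases eq_or_ne i k with rfl | hik
  · have hc : c = 1 := by simpa [hij, hkl] using hi.symm
    obtain rfl : j = l := by
      by_contra hjl
      simp [hkl.symm, Ne.symm hjl, hc] at hl
      exact ht hl.symm
    left
    simpa [hkl.symm, hc] using hl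
  rcases eq_or_ne i l with rfl | hil
  · obtain rfl : j = k := by
      by_contra hjk
      simp [hkl, Ne.symm hjk] at hk
      simp [← hk, hij] at hi
    right
    simp [hij, Ne.symm hik] at hi hk
    exact ⟨rfl, rfl, by rw [hk, hi]⟩
  · simp [hik, hil, hij] at hi

theorem single_ne_smul_single_add_smul_single {a k l : I} (hkl : k ≠ l) {t c : K} (ht : t ≠ 0) :
    Pi.single a 1 ≠ c • (Pi.single k 1 + t • Pi.single l (1 : K)) := by
  intro h
  have hx : ∀ x, (if x = a then 1 else 0) =
      c * ((if x = k then 1 else 0) + t * (if x = l then 1 else 0)) := fun x => by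
    simpa [Pi.single_apply] using congrFun h x
  have ha := hx a
  have hk := hx k
  have hl := hx l
  rcases eq_or_ne a k with rfl | hak
  · simp [Ne.symm hkl, ht] at hl
    simp [hl] at ha
  · simp [Ne.symm hak, hkl] at hk
    simp [← hk] at ha

end Coordinates

section PairLines

variable {K I : Type*} [Field K] [Fintype I] [DecidableEq I]

theorem exists_perm_isBilinearDense_lineGraph_of_two_ne_zero_of_three_ne_zero
    (h2 : (2 : K) ≠ 0) (h3 : (3 : K) ≠ 0) :
    ∃ f : Equiv.Perm (ℙ K (I → K)), IsBilinearDense K (lineGraph f) := by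
  let e : I → I → K := fun i => Pi.single i 1
  let v : {q : I × I // q.1 ≠ q.2} → I → K := fun q => e q.1.1 + (2 : K) • e q.1.2
  have hv : ∀ q, v q ≠ 0 := fun q h => by simpa [v, e, q.2] using congrFun h q.1.1
  have hinj : Function.Injective fun q => mk K (v q) (hv q) := by
    rintro ⟨⟨i, j⟩, hij⟩ ⟨⟨k, l⟩, hkl⟩ h
    obtain ⟨c, hc⟩ := (mk_eq_mk_iff' K _ _ _ _).1 h
    rcases single_add_smul_single_eq_smul hij hkl h2 hc.symm with ⟨rfl, rfl, -⟩ | ⟨-, -, h4⟩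
    · rfl
    · exact absurd (by linear_combination h4 : (3 : K) = 0) h3
  let σ : Equiv.Perm {q : I × I // q.1 ≠ q.2} :=
    (Equiv.prodComm I I).subtypeEquiv fun _ => ne_comm
  refine ⟨σ.viaEmbedding (lineEmbedding v hv hinj), fun B hB => ?_⟩
  have hdiag (a : I) : B (e a) (e a) = 0 := by
    have ha : e a ≠ 0 := fun h => by simpa [e] using congrFun h a
    refine hB _ (self_mem_lineGraph_viaEmbedding hinj σ ha fun ⟨⟨k, l⟩, hkl⟩ h => ?_)
    obtain ⟨c, hc⟩ := (mk_eq_mk_iff' K _ _ _ _).1 h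
    exact single_ne_smul_single_add_smul_single hkl h2 hc.symm
  have hanti {i j : I} (hij : i ≠ j) : B (e i) (e j) + B (e j) (e i) = 0 := by
    have hx : e i + (1 : K) • e j ≠ 0 := fun h => by simpa [e, hij] using congrFun h i
    have := hB _ (self_mem_lineGraph_viaEmbedding hinj σ hx fun ⟨⟨k, l⟩, hkl⟩ h => ?_)
    · simp only [map_add, map_smul, LinearMap.add_apply, LinearMap.smul_apply, smul_eq_mul]
        at this
      linear_combination this - hdiag i - hdiag j
    obtain ⟨c, hc⟩ := (mk_eq_mk_iff' K _ _ _ _).1 h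
    rcases single_add_smul_single_eq_smul hij hkl h2 hc.symm with ⟨-, -, h12⟩ | ⟨-, -, h12⟩
    · exact one_ne_zero (by linear_combination -h12 : (1 : K) = 0)
    · exact one_ne_zero (by linear_combination h12 : (1 : K) = 0)
  have hswap {i j : I} (hij : i ≠ j) : B (e i) (e j) + 4 * B (e j) (e i) = 0 := by
    have := hB _ (mem_lineGraph_viaEmbedding hinj σ ⟨(i, j), hij⟩)
    rw [show σ ⟨(i, j), hij⟩ = ⟨(j, i), hij.symm⟩ from rfl] at this
    simp only [v, map_add, map_smul, LinearMap.add_apply, LinearMap.smul_apply,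
      smul_eq_mul] at this
    linear_combination this - 2 * hdiag i - 2 * hdiag j
  refine LinearMap.ext_basis (Pi.basisFun K I) (Pi.basisFun K I) fun i j => ?_
  simp only [Pi.basisFun_apply, LinearMap.zero_apply]
  rcases eq_or_ne i j with rfl | hij
  · exact hdiag i
  · have h3' : (3 : K) * B (e i) (e j) = 0 := by
      linear_combination 4 * hanti hij - hswap hij
    exact (mul_eq_zero.1 h3').resolve_left h3

end PairLines

section QuadraticSums

open Finset

theorem Finset.sum_sum_insert {I R : Type*} [DecidableEq I] [AddCommMonoid R] (N : I → I → R)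
    {A : Finset I} {l : I} (hl : l ∉ A) :
    ∑ a ∈ insert l A, ∑ b ∈ insert l A, N a b =
      ∑ a ∈ A, ∑ b ∈ A, N a b + (N l l + ∑ x ∈ A, (N x l + N l x)) := by
  simp only [sum_insert hl, sum_add_distrib]
  abel

variable {I R : Type*} [Fintype I] [DecidableEq I]

theorem exists_add_eq_of_sum_sum_eq_zero [AddCommGroup R] {N : I → I → R} {s : ℕ} (hs : 1 ≤ s)
    (hI : s + 2 ≤ Fintype.card I)
    (h : ∀ A : Finset I, #A = s ∨ #A = s + 1 → ∑ a ∈ A, ∑ b ∈ A, N a b = 0) :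
    ∃ β, (∀ a b, a ≠ b → N a b + N b a = β) ∧ ∀ a, N a a + s • β = 0 := by
  have hstep (A : Finset I) (l : I) (hA : #A = s) (hl : l ∉ A) :
      N l l + ∑ x ∈ A, (N x l + N l x) = 0 := by
    have := h (insert l A) (Or.inr (by rw [card_insert_of_notMem hl, hA]))
    rwa [sum_sum_insert N hl, h A (Or.inl hA), zero_add] at this
  have hconst (l c c' : I) (hc : c ≠ l) (hc' : c' ≠ l) : N c l + N l c = N c' l + N l c' := by
    obtain ⟨T, hT, hTcard⟩ := exists_subset_card_eq (s := univ \ {l, c, c'}) (n := s - 1) (by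
      grw [card_sdiff_of_subset (subset_univ _), card_univ, card_le_three]
      omega)
    simp only [subset_iff, mem_sdiff, mem_univ, mem_insert, mem_singleton, true_and] at hT
    have h₁ := hstep (insert c T) l (by rw [card_insert_of_notMem (by grind), hTcard]; omega)
      (by grind)
    have h₂ := hstep (insert c' T) l (by rw [card_insert_of_notMem (by grind), hTcard]; omega)
      (by grind)
    rw [sum_insert (by grind)] at h₁ h₂
    exact add_right_cancel (add_left_cancel (h₁.trans h₂.symm))
  obtain ⟨a₀, b₀, hab⟩ := Fintype.exists_pair_of_one_lt_card (show 1 < Fintype.card I by omega)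
  have hβ (a b : I) (hab' : a ≠ b) : N a b + N b a = N a₀ b₀ + N b₀ a₀ := by
    rcases eq_or_ne b b₀ with rfl | hb
    · exact hconst b a a₀ hab' hab
    · calc N a b + N b a = N b₀ b + N b b₀ := hconst b a b₀ hab' hb.symm
        _ = N b b₀ + N b₀ b := add_comm _ _
        _ = N a₀ b₀ + N b₀ a₀ := hconst b₀ b a₀ hb hab
  refine ⟨_, hβ, fun l => ?_⟩
  obtain ⟨A, hA, hAcard⟩ := exists_subset_card_eq (s := univ.erase l) (n := s) (by
    rw [card_erase_of_mem (mem_univ l), card_univ]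
    omega)
  have hlA : l ∉ A := fun h => by simpa using hA h
  have := hstep A l hAcard hlA
  rwa [sum_congr rfl fun x hx => hβ x l (ne_of_mem_of_not_mem hx hlA), sum_const, hAcard] at this

end QuadraticSums

section Rotation

open Finset Equiv

variable {I R : Type*}

theorem eq_zero_of_apply_perm_eq [Zero R] {M : I → I → R} {r : Perm I}
    (hr : ∀ x y, ∃ k : ℕ, (r ^ k) x = y) (hadj : ∀ a b, M a (r b) = M (r a) b)
    (hdiag : ∀ a, M a a = 0) (hdiag' : ∀ a, M a (r a) = 0) : M = 0 := by
  have hpow (k : ℕ) (a b : I) : M a ((r ^ k) b) = M ((r ^ k) a) b := by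
    induction k generalizing a b with
    | zero => rfl
    | succ k ih =>
      rw [pow_succ', Perm.mul_apply, hadj, ih, ← Perm.mul_apply, ← pow_succ, pow_succ']
  funext x y
  obtain ⟨m, rfl⟩ := hr x y
  obtain ⟨k, rfl | rfl⟩ := Nat.even_or_odd' m
  · rw [two_mul, pow_add, Perm.mul_apply, hpow]
    exact hdiag _
  · rw [show 2 * k + 1 = k + (k + 1) by ring, pow_add, Perm.mul_apply, hpow, pow_succ',
      Perm.mul_apply]
    exact hdiag' _

variable [Fintype I] [DecidableEq I]

theorem eq_zero_of_sum_sum_eq_zero_of_rotate_of_swap [CommRing R] {M : I → I → R}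
    {r : Perm I} (hr : ∀ x y, ∃ k : ℕ, (r ^ k) x = y) {u : I} (hu : r u ≠ u)
    (hu₂ : r (r u) ≠ u) (hI : 7 ≤ Fintype.card I)
    (h₁₂ : ∀ A : Finset I, #A = 1 ∨ #A = 2 → ∑ a ∈ A, ∑ b ∈ A, M a b = 0)
    (h₃₄ : ∀ A : Finset I, #A = 3 ∨ #A = 4 → ∑ a ∈ A, ∑ b ∈ A, M a (r b) = 0)
    (h₅₆ : ∀ A : Finset I, #A = 5 ∨ #A = 6 → ∑ a ∈ A, ∑ b ∈ A, M a (swap u (r u) b) = 0) :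
    M = 0 := by
  have hdiag (a : I) : M a a = 0 := by simpa using h₁₂ {a} (by simp)
  have hanti (a b : I) : M a b + M b a = 0 := by
    rcases eq_or_ne a b with rfl | hab
    · simp [hdiag]
    · simpa [sum_pair hab, hdiag] using h₁₂ {a, b} (Or.inr (card_pair hab))
  obtain ⟨β, hβ, hβ'⟩ := exists_add_eq_of_sum_sum_eq_zero (s := 3) (by norm_num) (by omega) h₃₄
  obtain ⟨γ, hγ, hγ'⟩ := exists_add_eq_of_sum_sum_eq_zero (s := 5) (by norm_num) (by omega) h₅₆
  simp only [nsmul_eq_mul, Nat.cast_ofNat] at hβ' hγ'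
  -- the swap has two distinct fixed points, where the pair sums are those of `M`
  have hγ0 : γ = 0 := by
    obtain ⟨x, hx, y, hy, hxy⟩ := one_lt_card.1 (show 1 < #(univ \ {u, r u}) by
      grw [card_sdiff_of_subset (subset_univ _), card_univ, card_le_two]
      omega)
    simp only [mem_sdiff, mem_univ, mem_insert, mem_singleton, true_and, not_or] at hx hy
    rw [← hγ x y hxy, swap_apply_of_ne_of_ne hx.1 hx.2, swap_apply_of_ne_of_ne hy.1 hy.2,
      hanti]
  -- by the rotation `M u (r u)`, `M u (r² u)`, `M (r u) (r² u)` are `-3β`, `β`, `-3β`, and the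
  -- swap gives `M u (r u) = 0` and `M (r² u) (r u) + M u (r² u) = 0`
  have hβ0 : β = 0 := by
    have h₁ := hγ' u
    have h₂ := hβ' u
    have h₃ := hβ u (r u) hu.symm
    have h₄ := hβ' (r u)
    have h₅ := hγ (r (r u)) u hu₂
    rw [swap_apply_left] at h₁ h₅
    rw [swap_apply_of_ne_of_ne hu₂ (r.injective.ne hu)] at h₅
    linear_combination h₄ - hanti (r (r u)) (r u) + h₅ - h₃ + hdiag (r u) - h₂ + h₁ - 4 * hγ0
  have hadj (a b : I) : M a (r b) = M (r a) b := by
    rcases eq_or_ne a b with rfl | hab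
    · linear_combination 2 * hβ' a - 6 * hβ0 - hanti a (r a)
    · linear_combination hβ a b hab - hanti b (r a) + hβ0
  exact eq_zero_of_apply_perm_eq hr hadj hdiag fun a => by linear_combination hβ' a - 3 * hβ0

end Rotation

section IndicatorVectors

open Finset Equiv

def Finset.mapByCard {α : Type*} (τ : ℕ → Perm α) : Perm (Finset α) where
  toFun A := A.map (τ #A).toEmbedding
  invFun A := A.map (τ #A).symm.toEmbedding
  left_inv A := by simp [map_map]
  right_inv A := by simp [map_map]

variable {K I : Type*} [Field K] [DecidableEq I]

theorem Finset.sum_single_one_ne_zero {A : Finset I} (hA : A.Nonempty) :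
    ∑ a ∈ A, Pi.single a (1 : K) ≠ 0 := by
  obtain ⟨a, ha⟩ := hA
  intro h
  simpa [ha] using congrFun h a

theorem Finset.eq_of_smul_sum_single_one_eq {A C : Finset I} (hA : A.Nonempty) {c : K}
    (h : c • ∑ a ∈ C, Pi.single a (1 : K) = ∑ a ∈ A, Pi.single a 1) : A = C := by
  have hx (x : I) : c * (if x ∈ C then 1 else 0) = if x ∈ A then 1 else 0 := by
    simpa using congrFun h x
  obtain ⟨a, ha⟩ := hA
  have hc : c = 1 := by
    have := hx a
    split_ifs at this <;> simp_all
  ext x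
  have := hx x
  rw [hc, one_mul] at this
  split_ifs at this <;> simp_all

end IndicatorVectors

section IndicatorLines

open Finset Equiv

variable {K : Type*} [Field K]

theorem exists_perm_isBilinearDense_lineGraph_of_seven_le {n : ℕ} (hn : 7 ≤ n) :
    ∃ f : Perm (ℙ K (Fin n → K)), IsBilinearDense K (lineGraph f) := by
  obtain ⟨m, rfl⟩ : ∃ m, n = m + 7 := ⟨n - 7, by omega⟩
  let r := finRotate (m + 7)
  let τ : ℕ → Perm (Fin (m + 7)) := fun k =>
    if k = 3 ∨ k = 4 then r else if k = 5 ∨ k = 6 then swap 0 (r 0) else 1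
  let σ : Perm {A : Finset (Fin (m + 7)) // A.Nonempty} :=
    (mapByCard τ).subtypeEquiv fun A => by simp [mapByCard]
  let v : {A : Finset (Fin (m + 7)) // A.Nonempty} → Fin (m + 7) → K :=
    fun A => ∑ a ∈ A.1, Pi.single a 1
  have hv (A) : v A ≠ 0 := sum_single_one_ne_zero A.2
  have hinj : Function.Injective fun A => mk K (v A) (hv A) := fun A C h => by
    obtain ⟨c, hc⟩ := (mk_eq_mk_iff' K _ _ _ _).1 h
    exact Subtype.ext (eq_of_smul_sum_single_one_eq A.2 hc)
  refine ⟨σ.viaEmbedding (lineEmbedding v hv hinj), fun B hB => ?_⟩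
  let M : Fin (m + 7) → Fin (m + 7) → K := fun a b => B (Pi.single a 1) (Pi.single b 1)
  have hsum (A : Finset (Fin (m + 7))) (hA : A.Nonempty) :
      ∑ a ∈ A, ∑ b ∈ A, M a (τ #A b) = 0 := by
    have := hB _ (mem_lineGraph_viaEmbedding hinj σ ⟨A, hA⟩)
    simp only [v, σ, mapByCard, subtypeEquiv_apply, coe_fn_mk, sum_map, map_sum,
      LinearMap.sum_apply, toEmbedding_apply] at this
    rwa [sum_comm] at this
  have hr (x y : Fin (m + 7)) : ∃ k : ℕ, (r ^ k) x = y :=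
    (isCycle_finRotate_of_le (by omega)).exists_pow_eq (by simp) (by simp)
  have hM : M = 0 := by
    refine eq_zero_of_sum_sum_eq_zero_of_rotate_of_swap hr (u := 0)
      (by simp [r, finRotate_apply])
      (by simp [r, finRotate_apply, Fin.ext_iff, Fin.val_add, Nat.mod_eq_of_lt]) (by simp)
      (fun A hA => ?_) (fun A hA => ?_) (fun A hA => ?_)
    all_goals
      have hne : A.Nonempty := card_pos.1 (by omega)
      rcases hA with hA | hA <;> simpa [τ, hA] using hsum A hne
  refine LinearMap.ext_basis (Pi.basisFun K _) (Pi.basisFun K _) fun i j => ?_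
  simpa using congrFun (congrFun hM i) j

end IndicatorLines

/-- For every prime `p` and every `n ≥ 11` (and also for every prime `p ≥ 13` and `n ≥ 2`),
there is a transverse non-bilinear set `P ⊆ F_p^n × F_p^n` whose fiber over `0` is
everything and whose fiber over each nonzero `x` is a line. -/
theorem exists_transverse_not_bilinear_line_fibers (p n : ℕ) (hp : p.Prime)
    (hn : 11 ≤ n ∨ (13 ≤ p ∧ 2 ≤ n)) :
    ∃ P : Set ((Fin n → ZMod p) × (Fin n → ZMod p)),
      IsTransverse P ∧ ¬ IsBilinearSet p n P ∧
      {y : Fin n → ZMod p | ((0 : Fin n → ZMod p), y) ∈ P} = Set.univ ∧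
      ∀ x : Fin n → ZMod p, x ≠ 0 →
        ∃ L : Submodule (ZMod p) (Fin n → ZMod p),
          Module.finrank (ZMod p) L = 1 ∧ {y | (x, y) ∈ P} = (L : Set (Fin n → ZMod p)) := by
  have := Fact.mk hp
  have hcast {k : ℕ} (hk : 0 < k) (hkp : k < p) : (k : ZMod p) ≠ 0 := by
    rw [Ne, ZMod.natCast_eq_zero_iff]
    exact fun h => absurd (Nat.le_of_dvd hk h) (by omega)
  obtain ⟨f, hf⟩ : ∃ f : Equiv.Perm (ℙ (ZMod p) (Fin n → ZMod p)),
      IsBilinearDense (ZMod p) (lineGraph f) := by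
    rcases hn with hn | ⟨hp, -⟩
    · exact exists_perm_isBilinearDense_lineGraph_of_seven_le (by omega)
    · exact exists_perm_isBilinearDense_lineGraph_of_two_ne_zero_of_three_ne_zero
        (by exact_mod_cast hcast (k := 2) (by norm_num) (by omega))
        (by exact_mod_cast hcast (k := 3) (by norm_num) (by omega))
  have hrank : 1 < Module.finrank (ZMod p) (Fin n → ZMod p) := by
    rw [Module.finrank_fin_fun]
    omega
  exact ⟨lineGraph f, isTransverse_lineGraph f.injective,
    not_isBilinearSet_of_isBilinearDense hf zero_right_mem_lineGraph zero_left_mem_lineGraph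
      (lineGraph_ne_univ hrank),
    Set.eq_univ_of_forall zero_left_mem_lineGraph,
    fun x hx => ⟨_, finrank_submodule _, setOf_mem_lineGraph hx⟩⟩
end

section
/- Let V_1 and V_2 be finite-dimensional vector spaces over F_p and let P ⊆ V_1 × V_2. Then P is transverse if and only if the fiber map x ↦ P_{x·} satisfies all of the following: (i) for every x ∈ V_1, the fiber P_{x·} is either empty or a linear subspace of V_2, and P_{x·} ⊆ P_{0·}; (ii) for every nonzero x ∈ V_1 and every nonzero scalar λ ∈ F_p, P_{λx·} = P_{x·}; (iii) for all x, y ∈ V_1 and every z in the linear span of {x, y}, P_{z·} ⊇ P_{x·} ∩ P_{y·}. -/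
/-!
Both sums act fibrewise: `P +V P = P` says every vertical fiber `P_{x·}` is closed under
addition and, when nonempty, contains `0`; `P +H P = P` says the same of every horizontal
fiber `P_{·y}`. Over `𝔽_p` a nonempty set closed under addition is a subspace, since
`c • y = (c.val + p) • y` is a positive multiple of `y`. So `P` is transverse iff all its
vertical and horizontal fibers are empty or subspaces, and a horizontal fiber is empty or a
subspace exactly when it contains the span of any two of its points, which is (iii). Properties
(i) (second half) and (ii) are the special cases `z = 0` and `z = l • x`, `x = l⁻¹ • (l • x)`.
-/

open Submodule

theorem ZMod.smul_mem_of_add_mem {n : ℕ} [NeZero n] {M : Type*} [AddCommMonoid M]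
    [Module (ZMod n) M] {S : Set M} (hS : ∀ a ∈ S, ∀ b ∈ S, a + b ∈ S) {y : M} (hy : y ∈ S)
    (c : ZMod n) : c • y ∈ S := by
  have succ_nsmul_mem : ∀ k : ℕ, (k + 1) • y ∈ S := by
    intro k
    induction k with
    | zero => simpa using hy
    | succ k ih => rw [succ_nsmul]; exact hS _ ih _ hy
  have hc : c • y = (c.val + n - 1 + 1) • y := by
    rw [Nat.sub_add_cancel (by have := NeZero.pos n; omega), add_nsmul,
      ← Nat.cast_smul_eq_nsmul (ZMod n) n, ZMod.natCast_self, zero_smul, add_zero,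
      ← Nat.cast_smul_eq_nsmul (ZMod n), ZMod.natCast_zmod_val]
  rw [hc]
  exact succ_nsmul_mem _

theorem ZMod.eq_empty_or_exists_submodule_iff_add_mem {n : ℕ} [NeZero n] {M : Type*}
    [AddCommMonoid M] [Module (ZMod n) M] {S : Set M} :
    (S = ∅ ∨ ∃ N : Submodule (ZMod n) M, S = N) ↔ ∀ a ∈ S, ∀ b ∈ S, a + b ∈ S := by
  refine ⟨?_, fun hS => ?_⟩
  · rintro (rfl | ⟨N, rfl⟩)
    · simp
    · exact fun a ha b hb => N.add_mem ha hb
  rcases S.eq_empty_or_nonempty with hempty | ⟨y, hy⟩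
  · exact Or.inl hempty
  refine Or.inr ⟨{ carrier := S
                   add_mem' := fun ha hb => hS _ ha _ hb
                   zero_mem' := by simpa using ZMod.smul_mem_of_add_mem hS hy (0 : ZMod n)
                   smul_mem' := fun c _ hx => ZMod.smul_mem_of_add_mem hS hx c }, rfl⟩

theorem eq_empty_or_exists_submodule_iff_span_pair_subset {R M : Type*} [Semiring R]
    [AddCommMonoid M] [Module R M] {S : Set M} :
    (S = ∅ ∨ ∃ N : Submodule R M, S = N) ↔ ∀ x ∈ S, ∀ y ∈ S, (span R {x, y} : Set M) ⊆ S := by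
  refine ⟨?_, fun hS => ?_⟩
  · rintro (rfl | ⟨N, rfl⟩)
    · simp
    · intro x hx y hy
      exact span_le.mpr (Set.insert_subset hx (Set.singleton_subset_iff.mpr hy))
  rcases S.eq_empty_or_nonempty with hempty | ⟨y, hy⟩
  · exact Or.inl hempty
  have mem_of_mem_span : ∀ {a b z}, a ∈ S → b ∈ S → z ∈ span R {a, b} → z ∈ S :=
    fun ha hb hz => hS _ ha _ hb hz
  refine Or.inr ⟨{ carrier := S
                   add_mem' := fun ha hb => mem_of_mem_span ha hb
                     (add_mem (subset_span (by simp)) (subset_span (by simp)))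
                   zero_mem' := mem_of_mem_span hy hy (zero_mem _)
                   smul_mem' := fun c x hx => mem_of_mem_span hx hx
                     (smul_mem _ c (subset_span (by simp))) }, rfl⟩

section Fibers

variable {V1 V2 : Type*}

theorem hSum_eq_preimage_swap [Add V1] (A : Set (V1 × V2)) :
    hSum A = Prod.swap ⁻¹' vSum (Prod.swap ⁻¹' A) :=
  rfl

theorem vSum_eq_self_iff {n : ℕ} [NeZero n] [AddCommMonoid V2] [Module (ZMod n) V2]
    {A : Set (V1 × V2)} :
    vSum A = A ↔ ∀ x, {y | (x, y) ∈ A} = ∅ ∨ ∃ N : Submodule (ZMod n) V2, {y | (x, y) ∈ A} = N := by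
  refine ⟨fun h x => ZMod.eq_empty_or_exists_submodule_iff_add_mem.mpr ?_, fun h => ?_⟩
  · intro y₁ hy₁ y₂ hy₂
    show (x, y₁ + y₂) ∈ A
    rw [← h]
    exact ⟨y₁, y₂, hy₁, hy₂, rfl⟩
  refine Set.Subset.antisymm ?_ fun ⟨x, y⟩ hxy => ?_
  · rintro ⟨x, _⟩ ⟨y₁, y₂, hy₁, hy₂, rfl⟩
    exact (ZMod.eq_empty_or_exists_submodule_iff_add_mem.mp (h x)) y₁ hy₁ y₂ hy₂
  obtain hempty | ⟨N, hN⟩ := h x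
  · exact (Set.eq_empty_iff_forall_notMem.mp hempty y hxy).elim
  have hzero : (x, (0 : V2)) ∈ A := by
    have : (0 : V2) ∈ {y | (x, y) ∈ A} := hN ▸ N.zero_mem
    exact this
  exact ⟨y, 0, hxy, hzero, (add_zero y).symm⟩

theorem hSum_eq_self_iff {n : ℕ} [NeZero n] [AddCommMonoid V1] [Module (ZMod n) V1]
    {A : Set (V1 × V2)} :
    hSum A = A ↔ ∀ y, {x | (x, y) ∈ A} = ∅ ∨ ∃ N : Submodule (ZMod n) V1, {x | (x, y) ∈ A} = N := by
  refine Iff.trans ?_ (vSum_eq_self_iff (A := Prod.swap ⁻¹' A))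
  rw [hSum_eq_preimage_swap]
  conv_rhs => rw [← (Set.preimage_injective.mpr Prod.swap_surjective).eq_iff]
  simp only [Set.preimage_preimage, Prod.swap_swap, Set.preimage_id']

end Fibers

theorem isTransverse_iff_fiber_rigidity_general (p : ℕ) [Fact p.Prime]
    (V1 V2 : Type*) [AddCommGroup V1] [Module (ZMod p) V1]
    [AddCommGroup V2] [Module (ZMod p) V2]
    (P : Set (V1 × V2)) :
    IsTransverse P ↔
      ((∀ x : V1,
          ({y | (x, y) ∈ P} = (∅ : Set V2) ∨
            ∃ S : Submodule (ZMod p) V2, {y | (x, y) ∈ P} = (S : Set V2)) ∧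
          {y | (x, y) ∈ P} ⊆ {y | ((0 : V1), y) ∈ P}) ∧
       (∀ x : V1, x ≠ 0 → ∀ l : ZMod p, l ≠ 0 →
          {y | (l • x, y) ∈ P} = {y | (x, y) ∈ P}) ∧
       (∀ x y z : V1, z ∈ Submodule.span (ZMod p) {x, y} →
          {v | (x, v) ∈ P} ∩ {v | (y, v) ∈ P} ⊆ {v | (z, v) ∈ P})) := by
  rw [IsTransverse, vSum_eq_self_iff (n := p), hSum_eq_self_iff (n := p)]
  refine ⟨fun ⟨hv, hh⟩ => ?_, fun ⟨h1, _, h3⟩ => ⟨fun x => (h1 x).1, fun v => ?_⟩⟩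
  · have h3 : ∀ x y z : V1, z ∈ span (ZMod p) {x, y} →
        {v | (x, v) ∈ P} ∩ {v | (y, v) ∈ P} ⊆ {v | (z, v) ∈ P} := fun x y z hz v ⟨hx, hy⟩ =>
      eq_empty_or_exists_submodule_iff_span_pair_subset.mp (hh v) x hx y hy hz
    have fiber_subset : ∀ x z : V1, z ∈ span (ZMod p) {x} →
        {v | (x, v) ∈ P} ⊆ {v | (z, v) ∈ P} := fun x z hz => by
      simpa using h3 x x z (by simpa using hz)
    refine ⟨fun x => ⟨hv x, fiber_subset x 0 (zero_mem _)⟩, fun x _ l hl => ?_, h3⟩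
    exact Set.Subset.antisymm (fiber_subset _ _ (mem_span_singleton.mpr ⟨l⁻¹, inv_smul_smul₀ hl x⟩))
      (fiber_subset _ _ (mem_span_singleton.mpr ⟨l, rfl⟩))
  · exact eq_empty_or_exists_submodule_iff_span_pair_subset.mpr
      fun x hx y hy z hz => h3 x y z hz ⟨hx, hy⟩

/-- Characterisation of transverse sets `P ⊆ V₁ × V₂` by rigidity properties of the
fiber map `x ↦ P_{x·}`. -/
theorem isTransverse_iff_fiber_rigidity (p : ℕ) [Fact p.Prime]
    (V1 V2 : Type*) [AddCommGroup V1] [Module (ZMod p) V1]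
    [AddCommGroup V2] [Module (ZMod p) V2]
    [FiniteDimensional (ZMod p) V1] [FiniteDimensional (ZMod p) V2]
    (P : Set (V1 × V2)) :
    IsTransverse P ↔
      ((∀ x : V1,
          ({y | (x, y) ∈ P} = (∅ : Set V2) ∨
            ∃ S : Submodule (ZMod p) V2, {y | (x, y) ∈ P} = (S : Set V2)) ∧
          {y | (x, y) ∈ P} ⊆ {y | ((0 : V1), y) ∈ P}) ∧
       (∀ x : V1, x ≠ 0 → ∀ l : ZMod p, l ≠ 0 →
          {y | (l • x, y) ∈ P} = {y | (x, y) ∈ P}) ∧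
       (∀ x y z : V1, z ∈ Submodule.span (ZMod p) {x, y} →
          {v | (x, v) ∈ P} ∩ {v | (y, v) ∈ P} ⊆ {v | (z, v) ∈ P})) :=
  isTransverse_iff_fiber_rigidity_general p V1 V2 P
end

section
/- Let V_1 and V_2 be finite-dimensional vector spaces over F_p with dim V_1 ≥ 2, and let ξ : ℙ(V_1) → ℙ(V_2) be a map between their projectivizations with the property that for all nonzero x, y, z ∈ V_1 with z in the linear span of {x, y}, the point ξ([z]) lies on the projective line through ξ([x]) and ξ([y]) (i.e. any representative of ξ([z]) lies in the linear span of representatives of ξ([x]) and ξ([y])). Then ξ is either constant or injective. -/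
/-!
If `ξ` identifies two distinct points `A = [u]` and `B = [v]`, it collapses the whole line `AB`
onto `Q = ξ A`. Suppose some `C = [t]` has `ξ C ≠ Q`. Two distinct points of a line span it, so `ξ`
is injective on every line it does not collapse; as all lines have `|K| + 1` points, `ξ` then maps
the line `CB` onto the line through `ξ C` and `Q`. Hence `D = [t + u]` has the same image as some
`X = [α t + β v]`, with `α ≠ 0` because `ξ D ≠ Q`. The line `DX` is therefore collapsed to `ξ D`,
but it meets `AB` in `[α u - β v]`, whose image is `Q`.
-/

open scoped LinearAlgebra.Projectivization

open Module Set Submodule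

namespace Projectivization

variable {K V W : Type*} [Field K] [AddCommGroup V] [Module K V] [AddCommGroup W] [Module K W]

def line (A B : ℙ K V) : Set (ℙ K V) := (A.submodule ⊔ B.submodule).projectivization

theorem mem_line_iff {A B C : ℙ K V} : C ∈ line A B ↔ C.submodule ≤ A.submodule ⊔ B.submodule :=
  Submodule.mem_projectivization_iff_submodule_le _ _

theorem left_mem_line (A B : ℙ K V) : A ∈ line A B := mem_line_iff.2 le_sup_left

theorem right_mem_line (A B : ℙ K V) : B ∈ line A B := mem_line_iff.2 le_sup_right

theorem mk_mem_line_mk_iff {x y z : V} (hx : x ≠ 0) (hy : y ≠ 0) (hz : z ≠ 0) :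
    mk K z hz ∈ line (mk K x hx) (mk K y hy) ↔ z ∈ span K {x, y} := by
  rw [mem_line_iff, submodule_mk, submodule_mk, submodule_mk, span_singleton_le_iff_mem,
    span_insert]

theorem mem_line_iff_rep_mem {A B C : ℙ K V} : C ∈ line A B ↔ C.rep ∈ span K {A.rep, B.rep} := by
  rw [← mk_mem_line_mk_iff A.rep_nonzero B.rep_nonzero C.rep_nonzero, mk_rep, mk_rep, mk_rep]

theorem line_self (A : ℙ K V) : line A A = {A} := by
  ext C
  rw [mem_line_iff, sup_idem, submodule_eq, submodule_eq, span_singleton_le_iff_mem,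
    mem_span_singleton, mem_singleton_iff]
  constructor
  · rintro ⟨a, ha⟩
    rw [← mk_rep C, ← mk_rep A]
    exact (mk_eq_mk_iff' K _ _ _ _).2 ⟨a, ha⟩
  · rintro rfl
    exact ⟨1, one_smul K _⟩

theorem finrank_submodule_sup {A B : ℙ K V} (h : A ≠ B) :
    finrank K ↥(A.submodule ⊔ B.submodule) = 2 := by
  rw [submodule_eq, submodule_eq, ← span_insert, ← Matrix.range_cons_cons_empty _ _ ![],
    finrank_span_eq_card (linearIndependent_pair_iff_ne.2 h), Fintype.card_fin]

theorem line_eq_of_ne {A B X Y : ℙ K V} (hXY : X ≠ Y) (hX : X ∈ line A B) (hY : Y ∈ line A B) :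
    line X Y = line A B := by
  obtain rfl | hAB := eq_or_ne A B
  · rw [line_self] at hX hY
    exact absurd (hX.trans hY.symm) hXY
  rw [line, line, line_unique hXY _ _ (finrank_submodule_sup hXY) (finrank_submodule_sup hAB)
    (left_mem_line X Y) (right_mem_line X Y) hX hY]

theorem ncard_line [Finite K] {A B : ℙ K V} (h : A ≠ B) : (line A B).ncard = Nat.card K + 1 := by
  set U := A.submodule ⊔ B.submodule
  have hrange : range (map U.subtype U.injective_subtype) = line A B := by
    ext C
    constructor
    · rintro ⟨P, rfl⟩
      induction P using ind with | h w hw => exact w.2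
    · intro hC
      induction C using ind with | h v hv =>
      have hvU : v ∈ U := hC
      exact ⟨mk K ⟨v, hvU⟩ (by rwa [ne_eq, Submodule.mk_eq_zero]), rfl⟩
  rw [← hrange, ncard_range_of_injective (map_injective _ _),
    card_of_finrank_two K U (finrank_submodule_sup h)]

def PreservesLines (ξ : ℙ K V → ℙ K W) : Prop :=
  ∀ A B, MapsTo ξ (line A B) (line (ξ A) (ξ B))

namespace PreservesLines

variable {ξ : ℙ K V → ℙ K W}

theorem apply_eq_of_mem_line (hξ : PreservesLines ξ) {A B C : ℙ K V} (h : ξ A = ξ B)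
    (hC : C ∈ line A B) : ξ C = ξ A := by
  simpa only [h, line_self, mem_singleton_iff] using hξ A B hC

theorem injOn_line (hξ : PreservesLines ξ) {A B : ℙ K V} (h : ξ A ≠ ξ B) :
    InjOn ξ (line A B) := by
  intro X hX Y hY hXY
  by_contra hne
  have hA := hξ.apply_eq_of_mem_line hXY (line_eq_of_ne hne hX hY ▸ left_mem_line A B)
  have hB := hξ.apply_eq_of_mem_line hXY (line_eq_of_ne hne hX hY ▸ right_mem_line A B)
  exact h (hA.trans hB.symm)

theorem image_line [Finite K] (hξ : PreservesLines ξ) {A B : ℙ K V} (h : ξ A ≠ ξ B) :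
    ξ '' line A B = line (ξ A) (ξ B) := by
  have hAB : A ≠ B := fun e => h (congrArg ξ e)
  have hcard : (line (ξ A) (ξ B)).ncard = (ξ '' line A B).ncard := by
    rw [(hξ.injOn_line h).ncard_image, ncard_line h, ncard_line hAB]
  exact eq_of_subset_of_ncard_le (hξ A B).image_subset hcard.le
    (finite_of_ncard_ne_zero (by rw [ncard_line h]; omega))

theorem apply_eq_of_apply_eq [Finite K] (hξ : PreservesLines ξ) {A B : ℙ K V} (hAB : A ≠ B)
    (h : ξ A = ξ B) (C : ℙ K V) : ξ C = ξ A := by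
  by_cases hC : C ∈ line A B
  · exact hξ.apply_eq_of_mem_line h hC
  by_contra hCA
  induction A using ind with | h u hu =>
  induction B using ind with | h v hv =>
  induction C using ind with | h t ht =>
  rw [mk_mem_line_mk_iff] at hC
  have htu : t + u ≠ 0 := fun e =>
    hC (mem_span_pair.2 ⟨-1, 0, by rw [eq_neg_of_add_eq_zero_left e]; module⟩)
  set D := mk K (t + u) htu
  have hDA : ξ D ≠ ξ (mk K u hu) := fun e => hCA <| by
    rw [hξ.apply_eq_of_mem_line e ((mk_mem_line_mk_iff _ _ _).2
      (mem_span_pair.2 ⟨1, -1, by module⟩)), e]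
  have hDimage : ξ D ∈ ξ '' line (mk K t ht) (mk K v hv) := by
    rw [hξ.image_line (h ▸ hCA), ← h]
    exact hξ _ _ ((mk_mem_line_mk_iff _ _ _).2 (mem_span_pair.2 ⟨1, 1, by module⟩))
  obtain ⟨X, hX, hXD⟩ := hDimage
  induction X using ind with | h x hx =>
  obtain ⟨α, β, hxαβ⟩ := mem_span_pair.1 ((mk_mem_line_mk_iff _ _ _).1 hX)
  have hα : α ≠ 0 := by
    rintro rfl
    refine hDA (hXD ▸ h ▸ congrArg ξ ((mk_eq_mk_iff' K _ _ _ _).2 ⟨β, ?_⟩))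
    simpa using hxαβ
  have hE : α • u - β • v ≠ 0 := fun e => hα <|
    (LinearIndependent.pair_iff.1 ((independent_mk_iff_LinearIndependent hu hv).1
      ((independent_pair_iff_ne _ _).2 hAB)) α (-β) (by rw [← e]; module)).1
  -- `α • u - β • v = α • (t + u) - x` lies on both `AB` and `DX`
  have hEA := hξ.apply_eq_of_mem_line h
    ((mk_mem_line_mk_iff _ _ hE).2 (mem_span_pair.2 ⟨α, -β, by module⟩))
  have hED := hξ.apply_eq_of_mem_line hXD
    ((mk_mem_line_mk_iff _ _ hE).2 (mem_span_pair.2 ⟨-1, α, by rw [← hxαβ]; module⟩))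
  exact hDA (hXD ▸ hED.symm.trans hEA)

theorem eq_const_or_injective [Finite K] (hξ : PreservesLines ξ) :
    (∀ P Q, ξ P = ξ Q) ∨ Function.Injective ξ := by
  refine or_iff_not_imp_right.2 fun hinj P Q => ?_
  obtain ⟨A, B, h, hAB⟩ := Function.not_injective_iff.1 hinj
  rw [hξ.apply_eq_of_apply_eq hAB h P, hξ.apply_eq_of_apply_eq hAB h Q]

end PreservesLines

theorem preservesLines_of_rep_mem_span {ξ : ℙ K V → ℙ K W}
    (h : ∀ (x y z : V) (hx : x ≠ 0) (hy : y ≠ 0) (hz : z ≠ 0), z ∈ span K {x, y} →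
      (ξ (mk K z hz)).rep ∈ span K {(ξ (mk K x hx)).rep, (ξ (mk K y hy)).rep}) :
    PreservesLines ξ := by
  intro A B C hC
  rw [mem_line_iff_rep_mem] at hC ⊢
  simpa only [mk_rep] using h _ _ _ A.rep_nonzero B.rep_nonzero C.rep_nonzero hC

end Projectivization

theorem collineation_constant_or_injective_general (p : ℕ) [Fact p.Prime]
    (V1 V2 : Type*) [AddCommGroup V1] [Module (ZMod p) V1]
    [AddCommGroup V2] [Module (ZMod p) V2]
    (ξ : Projectivization (ZMod p) V1 → Projectivization (ZMod p) V2)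
    (hcol : ∀ (x y z : V1) (hx : x ≠ 0) (hy : y ≠ 0) (hz : z ≠ 0),
      z ∈ Submodule.span (ZMod p) ({x, y} : Set V1) →
      (ξ (Projectivization.mk (ZMod p) z hz)).rep ∈
        Submodule.span (ZMod p)
          ({(ξ (Projectivization.mk (ZMod p) x hx)).rep,
            (ξ (Projectivization.mk (ZMod p) y hy)).rep} : Set V2)) :
    (∀ a b, ξ a = ξ b) ∨ Function.Injective ξ :=
  (Projectivization.preservesLines_of_rep_mem_span hcol).eq_const_or_injective

/-- A map between projectivizations that sends collinear points to collinear points is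
either constant or injective (Lemma on collineations). -/
theorem collineation_constant_or_injective (p : ℕ) [Fact p.Prime]
    (V1 V2 : Type*) [AddCommGroup V1] [Module (ZMod p) V1]
    [AddCommGroup V2] [Module (ZMod p) V2]
    [FiniteDimensional (ZMod p) V1] [FiniteDimensional (ZMod p) V2]
    (hdim : 2 ≤ Module.finrank (ZMod p) V1)
    (ξ : Projectivization (ZMod p) V1 → Projectivization (ZMod p) V2)
    (hcol : ∀ (x y z : V1) (hx : x ≠ 0) (hy : y ≠ 0) (hz : z ≠ 0),
      z ∈ Submodule.span (ZMod p) ({x, y} : Set V1) →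
      (ξ (Projectivization.mk (ZMod p) z hz)).rep ∈
        Submodule.span (ZMod p)
          ({(ξ (Projectivization.mk (ZMod p) x hx)).rep,
            (ξ (Projectivization.mk (ZMod p) y hy)).rep} : Set V2)) :
    (∀ a b, ξ a = ξ b) ∨ Function.Injective ξ :=
  collineation_constant_or_injective_general p V1 V2 ξ hcol
end

section
/- Let σ be the permutation of the nonzero vectors of F_2^3 given by: σ fixes (1,0,0), (0,1,0), (0,0,1), (1,1,0), and σ(1,0,1) = (0,1,1), σ(0,1,1) = (1,1,1), σ(1,1,1) = (1,0,1). Let P = ({0} × F_2^3) ∪ ⋃_{x ≠ 0} {0, x} × {0, σ(x)}. Then P is transverse but P is not a bilinear set; in particular, the point ((1,0,0),(0,1,0)) lies in the common zero set of all bilinear forms vanishing on P but does not lie in P. -/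
/-- The permutation `σ` of the nonzero vectors of `F_2^3`: it fixes `(1,0,0)`, `(0,1,0)`,
`(0,0,1)`, `(1,1,0)`, and cyclically permutes `(1,0,1) ↦ (0,1,1) ↦ (1,1,1) ↦ (1,0,1)`. -/
def sigmaPerm (x : Fin 3 → ZMod 2) : Fin 3 → ZMod 2 :=
  if x = ![1, 0, 1] then ![0, 1, 1]
  else if x = ![0, 1, 1] then ![1, 1, 1]
  else if x = ![1, 1, 1] then ![1, 0, 1]
  else x

/-- The set `P = ({0} × F_2^3) ∪ ⋃_{x ≠ 0} {0, x} × {0, σ(x)}`. -/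
def Psigma : Set ((Fin 3 → ZMod 2) × (Fin 3 → ZMod 2)) :=
  ({(0 : Fin 3 → ZMod 2)} : Set (Fin 3 → ZMod 2)) ×ˢ (Set.univ : Set (Fin 3 → ZMod 2)) ∪
    ⋃ x ∈ {v : Fin 3 → ZMod 2 | v ≠ 0},
      ({0, x} : Set (Fin 3 → ZMod 2)) ×ˢ ({0, sigmaPerm x} : Set (Fin 3 → ZMod 2))

/-!
`Psigma` is the union of the two axes `{0} × F` and `F × {0}` with the graph of `σ`. Such a set
is transverse in characteristic two as soon as `σ` is injective: a vertical or horizontal sum of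
two of its points either lies on an axis or repeats a point of the graph twice.

A bilinear set containing `(e₁, 0)` and `(0, e₂)` contains `(e₁, e₂)` as soon as every bilinear
form vanishing on it vanishes at `(e₁, e₂)`. For `Psigma` this holds because in characteristic two
`b(e₁, e₂)` is the sum of `b(x, σ x)` over the six nonzero `x ≠ e₁ + e₂`; yet `(e₁, e₂) ∉ Psigma`
since `σ e₁ = e₁`.
-/

section Transverse

variable {V₁ V₂ : Type*}

def axesUnionGraph [Zero V₁] [Zero V₂] (f : V₁ → V₂) : Set (V₁ × V₂) :=
  {q | q.1 = 0 ∨ q.2 = 0 ∨ q.2 = f q.1}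

lemma subset_vSum [AddZeroClass V₂] {A : Set (V₁ × V₂)} (h : ∀ x, (x, 0) ∈ A) :
    A ⊆ vSum A :=
  fun q hq => ⟨q.2, 0, hq, h q.1, (add_zero q.2).symm⟩

lemma subset_hSum [AddZeroClass V₁] {A : Set (V₁ × V₂)} (h : ∀ y, (0, y) ∈ A) :
    A ⊆ hSum A :=
  fun q hq => ⟨q.1, 0, hq, h q.2, (add_zero q.1).symm⟩

lemma vSum_axesUnionGraph_subset [Zero V₁] [AddCommGroup V₂] [Module (ZMod 2) V₂]
    (f : V₁ → V₂) : vSum (axesUnionGraph f) ⊆ axesUnionGraph f := by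
  rintro ⟨x, _⟩ ⟨y₁, y₂, h₁, h₂, rfl⟩
  simp only [axesUnionGraph, Set.mem_ofPred_eq] at h₁ h₂ ⊢
  rcases h₁ with hx | rfl | rfl
  · exact Or.inl hx
  all_goals rcases h₂ with hx | rfl | rfl
  all_goals first | exact Or.inl hx | simp [ZModModule.add_self]

lemma hSum_axesUnionGraph_subset [AddCommGroup V₁] [Module (ZMod 2) V₁] [Zero V₂]
    {f : V₁ → V₂} (hf : Function.Injective f) :
    hSum (axesUnionGraph f) ⊆ axesUnionGraph f := by
  rintro ⟨_, y⟩ ⟨x₁, x₂, h₁, h₂, rfl⟩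
  simp only [axesUnionGraph, Set.mem_ofPred_eq] at h₁ h₂ ⊢
  rcases h₁ with rfl | hy | hy₁
  · rcases h₂ with rfl | hy | rfl
    · simp
    · exact Or.inr (Or.inl hy)
    · simp
  · exact Or.inr (Or.inl hy)
  rcases h₂ with rfl | hy | hy₂
  · simp [hy₁]
  · exact Or.inr (Or.inl hy)
  · simp [hf (hy₁.symm.trans hy₂), ZModModule.add_self]

lemma isTransverse_axesUnionGraph [AddCommGroup V₁] [Module (ZMod 2) V₁] [AddCommGroup V₂]
    [Module (ZMod 2) V₂] {f : V₁ → V₂} (hf : Function.Injective f) :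
    IsTransverse (axesUnionGraph f) :=
  ⟨(vSum_axesUnionGraph_subset f).antisymm (subset_vSum fun _ => Or.inr (Or.inl rfl)),
    (hSum_axesUnionGraph_subset hf).antisymm (subset_hSum fun _ => Or.inl rfl)⟩

end Transverse

lemma IsBilinearSet.mem_of_forall_apply_eq_zero {p n : ℕ}
    {P : Set ((Fin n → ZMod p) × (Fin n → ZMod p))} (hP : IsBilinearSet p n P)
    {a c : Fin n → ZMod p} (ha : (a, 0) ∈ P) (hc : (0, c) ∈ P)
    (hac : ∀ b : (Fin n → ZMod p) →ₗ[ZMod p] (Fin n → ZMod p) →ₗ[ZMod p] ZMod p,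
      (∀ q ∈ P, b q.1 q.2 = 0) → b a c = 0) :
    (a, c) ∈ P := by
  obtain ⟨W₁, W₂, r, Q, rfl⟩ := hP
  exact ⟨ha.1, hc.2.1, fun i => hac (Q i) fun q hq => hq.2.2 i⟩

lemma LinearMap.BilinForm.apply_eq_of_charTwo {R M : Type*} [CommRing R] [CharP R 2]
    [AddCommGroup M] [Module R M] (b : LinearMap.BilinForm R M) (u v w : M) :
    b u v = b u u + b v v + b w w + b (u + w) (v + w) + b (v + w) (u + v + w) +
      b (u + v + w) (u + w) := by
  simp only [map_add, LinearMap.add_apply]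
  linear_combination
    -(b u u + b v v + 2 * b w w + b u w + b w u + b v w + b w v + b v u) *
      CharTwo.two_eq_zero (R := R)

lemma sigmaPerm_injective : Function.Injective sigmaPerm := by decide

lemma Psigma_eq_axesUnionGraph : Psigma = axesUnionGraph sigmaPerm := by
  ext ⟨x, y⟩
  simp only [Psigma, axesUnionGraph, Set.mem_union, Set.mem_prod, Set.mem_singleton_iff,
    Set.mem_univ, and_true, Set.mem_iUnion, Set.mem_ofPred_eq, Set.mem_insert_iff, exists_prop]
  constructor
  · rintro (hx | ⟨z, -, rfl | rfl, rfl | rfl⟩) <;> simp [*]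
  · rintro (hx | hy | hy)
    · exact Or.inl hx
    all_goals by_cases hx : x = 0
    all_goals first | exact Or.inl hx | exact Or.inr ⟨x, hx, Or.inr rfl, by tauto⟩

lemma apply_eq_zero_of_forall_mem_Psigma
    (b : (Fin 3 → ZMod 2) →ₗ[ZMod 2] (Fin 3 → ZMod 2) →ₗ[ZMod 2] ZMod 2)
    (hb : ∀ q ∈ Psigma, b q.1 q.2 = 0) : b ![1, 0, 0] ![0, 1, 0] = 0 := by
  have hσ {x y : Fin 3 → ZMod 2} (hxy : sigmaPerm x = y) : b x y = 0 :=
    hb (x, y) (Psigma_eq_axesUnionGraph ▸ Or.inr (Or.inr hxy.symm))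
  rw [LinearMap.BilinForm.apply_eq_of_charTwo b _ _ ![0, 0, 1], hσ (by decide), hσ (by decide),
    hσ (by decide), hσ (by decide), hσ (by decide), hσ (by decide)]
  norm_num

/-- `Psigma` is transverse but not bilinear; in particular `((1,0,0),(0,1,0))` lies in
the common zero set of all bilinear forms vanishing on `Psigma` but not in `Psigma`. -/
theorem Psigma_transverse_not_bilinear :
    IsTransverse Psigma ∧ ¬ IsBilinearSet 2 3 Psigma ∧
    (∀ b : (Fin 3 → ZMod 2) →ₗ[ZMod 2] (Fin 3 → ZMod 2) →ₗ[ZMod 2] ZMod 2,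
      (∀ q ∈ Psigma, b q.1 q.2 = 0) → b ![1, 0, 0] ![0, 1, 0] = 0) ∧
    (![1, 0, 0], ![0, 1, 0]) ∉ Psigma := by
  have hnotMem : (![1, 0, 0], ![0, 1, 0]) ∉ Psigma := by
    rw [Psigma_eq_axesUnionGraph]
    simp only [axesUnionGraph, Set.mem_ofPred_eq]
    decide
  refine ⟨Psigma_eq_axesUnionGraph ▸ isTransverse_axesUnionGraph sigmaPerm_injective,
    fun hP => hnotMem (hP.mem_of_forall_apply_eq_zero ?_ ?_ apply_eq_zero_of_forall_mem_Psigma),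
    apply_eq_zero_of_forall_mem_Psigma, hnotMem⟩
  all_goals rw [Psigma_eq_axesUnionGraph]; simp [axesUnionGraph]
end

section
/- Let V_1 and V_2 be finite-dimensional vector spaces over F_p and let P ⊆ V_1 × V_2 be a transverse set with P_{0·} = V_2. Then the set W = {x ∈ V_1 : P_{x·} = V_2} is a linear subspace of V_1, and moreover for any x, y ∈ V_1 with x − y ∈ W, the fibers P_{x·} and P_{y·} are equal. -/
/-!
Adding a point `(w, v)` of `P` horizontally to `(x, v)` shows that the fiber over `x` lies in the
fiber over `w + x` whenever the fiber over `w` is full. Hence the full-fiber set is an additive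
submonoid, and over `ZMod p` (where `c • x` is the repeated sum `c.val • x`) every additive submonoid
is a subspace; since `W = -W`, the fibers over `x` and `y` contain each other when `x - y ∈ W`.
-/

theorem add_mem_of_hSum_subset {V1 V2 : Type*} [Add V1] {A : Set (V1 × V2)}
    (hA : hSum A ⊆ A) {x₁ x₂ : V1} {v : V2} (h₁ : (x₁, v) ∈ A) (h₂ : (x₂, v) ∈ A) :
    (x₁ + x₂, v) ∈ A :=
  hA ⟨x₁, x₂, h₁, h₂, rfl⟩

theorem fiber_subset_fiber_add_of_full {V1 V2 : Type*} [Add V1] {A : Set (V1 × V2)}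
    (hA : hSum A ⊆ A) {w : V1} (hw : ∀ v, (w, v) ∈ A) (x : V1) :
    {v | (x, v) ∈ A} ⊆ {v | (w + x, v) ∈ A} :=
  fun _ hv => add_mem_of_hSum_subset hA (hw _) hv

def fullFiberAddSubmonoid {V1 V2 : Type*} [AddZeroClass V1] (A : Set (V1 × V2))
    (hA : hSum A ⊆ A) (h0 : ∀ v, ((0 : V1), v) ∈ A) : AddSubmonoid V1 where
  carrier := {x | ∀ v, (x, v) ∈ A}
  add_mem' hx hy v := add_mem_of_hSum_subset hA (hx v) (hy v)
  zero_mem' := h0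

theorem AddSubmonoid.zmod_smul_mem {n : ℕ} [NeZero n] {M : Type*} [AddCommMonoid M]
    [Module (ZMod n) M] (S : AddSubmonoid M) {x : M} (hx : x ∈ S) (c : ZMod n) : c • x ∈ S := by
  rw [← ZMod.natCast_zmod_val c, Nat.cast_smul_eq_nsmul]
  exact S.nsmul_mem hx _

def AddSubmonoid.toZModSubmodule (n : ℕ) [NeZero n] {M : Type*} [AddCommMonoid M]
    [Module (ZMod n) M] (S : AddSubmonoid M) : Submodule (ZMod n) M :=
  { S with smul_mem' := fun c _ hx => S.zmod_smul_mem hx c }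

theorem full_fiber_set_is_subspace_general (p : ℕ) [Fact p.Prime]
    (V1 V2 : Type*) [AddCommGroup V1] [Module (ZMod p) V1]
    [AddCommGroup V2] [Module (ZMod p) V2]
    (P : Set (V1 × V2)) (hP : IsTransverse P)
    (h0 : {y : V2 | ((0 : V1), y) ∈ P} = Set.univ) :
    (∃ W : Submodule (ZMod p) V1,
      {x : V1 | {y : V2 | (x, y) ∈ P} = Set.univ} = (W : Set V1)) ∧
    (∀ x y : V1, {v : V2 | (x - y, v) ∈ P} = Set.univ →
      {v : V2 | (x, v) ∈ P} = {v : V2 | (y, v) ∈ P}) := by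
  have hH : hSum P ⊆ P := hP.2.subset
  let W := (fullFiberAddSubmonoid P hH (Set.eq_univ_iff_forall.mp h0)).toZModSubmodule p
  have hW : ∀ x, {y : V2 | (x, y) ∈ P} = Set.univ ↔ x ∈ W := fun _ => Set.eq_univ_iff_forall
  refine ⟨⟨W, Set.ext hW⟩, fun x y hxy => ?_⟩
  have hyx : y - x ∈ W := by simpa using W.neg_mem ((hW _).mp hxy)
  apply subset_antisymm
  · simpa using fiber_subset_fiber_add_of_full hH hyx x
  · simpa using fiber_subset_fiber_add_of_full hH (Set.eq_univ_iff_forall.mp hxy) y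

/-- For a transverse set `P` with full fiber over `0`, the set
`W = {x : P_{x·} = V₂}` is a linear subspace, and fibers only depend on classes
modulo `W`. -/
theorem full_fiber_set_is_subspace (p : ℕ) [Fact p.Prime]
    (V1 V2 : Type*) [AddCommGroup V1] [Module (ZMod p) V1]
    [AddCommGroup V2] [Module (ZMod p) V2]
    [FiniteDimensional (ZMod p) V1] [FiniteDimensional (ZMod p) V2]
    (P : Set (V1 × V2)) (hP : IsTransverse P)
    (h0 : {y : V2 | ((0 : V1), y) ∈ P} = Set.univ) :
    (∃ W : Submodule (ZMod p) V1,
      {x : V1 | {y : V2 | (x, y) ∈ P} = Set.univ} = (W : Set V1)) ∧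
    (∀ x y : V1, {v : V2 | (x - y, v) ∈ P} = Set.univ →
      {v : V2 | (x, v) ∈ P} = {v : V2 | (y, v) ∈ P}) :=
  full_fiber_set_is_subspace_general p V1 V2 P hP h0
end
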